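/- arXiv:1910.05496 — 12 statements merged into one kernel-verified Lean document; each statement's English description precedes it below -/
import Mathlib

section
/- Let p ≥ 2 and n ≥ 1 be integers, and let A_1, …, A_p be real symmetric n×n matrices. Then Σ_{α,β=1}^p ‖A_α A_β − A_β A_α‖² + Σ_{α,β=1}^p (tr(A_α A_β))² ≤ (3/2) (Σ_{α=1}^p ‖A_α‖²)². -/
open scoped BigOperators
open Matrix Finset

/-- Bessel-type inequality for pairwise orthogonal vectors. -/
lemma LiLi.bessel {ι κ : Type*} [Fintype ι] [Fintype κ] (s : Finset κ)
    (v : κ → ι → ℝ) (M : ℝ) (hM0 : 0 ≤ M)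
    (horth : ∀ γ ∈ s, ∀ δ ∈ s, γ ≠ δ → ∑ k, v γ k * v δ k = 0)
    (hM : ∀ γ ∈ s, ∑ k, (v γ k) ^ 2 ≤ M) (x : ι → ℝ) :
    ∑ γ ∈ s, (∑ k, v γ k * x k) ^ 2 ≤ M * ∑ k, (x k) ^ 2 := by
  rcases hM0.eq_or_lt with hM0' | hMpos
  · -- M = 0 : all v γ = 0 for γ ∈ s
    have hz : ∀ γ ∈ s, ∀ k, v γ k = 0 := by
      intro γ hγ k
      have h1 : ∑ k, (v γ k) ^ 2 ≤ 0 := by simpa [← hM0'] using hM γ hγ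
      have h2 : ∑ k, (v γ k) ^ 2 = 0 :=
        le_antisymm h1 (Finset.sum_nonneg fun k _ => sq_nonneg _)
      have := (Finset.sum_eq_zero_iff_of_nonneg (fun k _ => sq_nonneg (v γ k))).1 h2
      exact pow_eq_zero_iff (n := 2) (by norm_num) |>.1 (this k (Finset.mem_univ k))
    have : ∑ γ ∈ s, (∑ k, v γ k * x k) ^ 2 = 0 := by
      apply Finset.sum_eq_zero
      intro γ hγ
      have : (∑ k, v γ k * x k) = 0 := by
        apply Finset.sum_eq_zero
        intro k _
        rw [hz γ hγ k, zero_mul]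
      rw [this]; ring
    rw [this]
    exact mul_nonneg hM0 (Finset.sum_nonneg fun k _ => sq_nonneg _)
  · set c : κ → ℝ := fun γ => ∑ k, v γ k * x k with hc
    have key : 0 ≤ M ^ 2 * (∑ k, (x k) ^ 2) - M * ∑ γ ∈ s, (c γ) ^ 2 := by
      have expand : ∑ k, (M * x k - ∑ γ ∈ s, c γ * v γ k) ^ 2
          = M ^ 2 * (∑ k, (x k) ^ 2) - 2 * M * (∑ γ ∈ s, (c γ) ^ 2)
            + ∑ γ ∈ s, (c γ) ^ 2 * (∑ k, (v γ k) ^ 2) := by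
        have e1 : ∀ k, (M * x k - ∑ γ ∈ s, c γ * v γ k) ^ 2
            = M ^ 2 * (x k) ^ 2 - 2 * M * (x k * ∑ γ ∈ s, c γ * v γ k)
              + (∑ γ ∈ s, c γ * v γ k) ^ 2 := by intro k; ring
        rw [Finset.sum_congr rfl fun k _ => e1 k]
        rw [Finset.sum_add_distrib, Finset.sum_sub_distrib]
        congr 1
        · congr 1
          · rw [Finset.mul_sum]
          · have e2 : ∀ k, 2 * M * (x k * ∑ γ ∈ s, c γ * v γ k)
                = 2 * M * ∑ γ ∈ s, c γ * (v γ k * x k) := by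
              intro k
              simp only [Finset.mul_sum]
              apply Finset.sum_congr rfl; intro γ _; ring
            rw [Finset.sum_congr rfl fun k _ => e2 k]
            have e3 : ∀ k, 2 * M * ∑ γ ∈ s, c γ * (v γ k * x k)
                = ∑ γ ∈ s, 2 * M * (c γ * (v γ k * x k)) := by
              intro k; rw [Finset.mul_sum]
            rw [Finset.sum_congr rfl fun k _ => e3 k, Finset.sum_comm]
            rw [Finset.mul_sum]
            apply Finset.sum_congr rfl; intro γ _
            have : ∑ k, 2 * M * (c γ * (v γ k * x k)) = 2 * M * c γ * ∑ k, v γ k * x k := by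
              rw [Finset.mul_sum]; apply Finset.sum_congr rfl; intro k _; ring
            rw [this, hc]; ring
        · -- ∑ k (∑ γ c γ v γ k)^2 = ∑ γ c γ ^2 ∑ k v γ k ^2
          have : ∀ k, (∑ γ ∈ s, c γ * v γ k) ^ 2
              = ∑ γ ∈ s, ∑ δ ∈ s, (c γ * v γ k) * (c δ * v δ k) := by
            intro k; rw [sq, Finset.sum_mul_sum]
          rw [Finset.sum_congr rfl fun k _ => this k, Finset.sum_comm]
          apply Finset.sum_congr rfl; intro γ hγ
          rw [Finset.sum_comm]
          have split : ∀ δ ∈ s, ∑ k, (c γ * v γ k) * (c δ * v δ k)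
              = c γ * c δ * ∑ k, v γ k * v δ k := by
            intro δ _
            rw [Finset.mul_sum]; apply Finset.sum_congr rfl; intro k _; ring
          rw [Finset.sum_congr rfl split]
          rw [Finset.sum_eq_single_of_mem γ hγ]
          · rw [sq]
            congr 1
            apply Finset.sum_congr rfl; intro k _; rw [sq]
          · intro δ hδ hne
            rw [horth γ hγ δ hδ (Ne.symm hne), mul_zero]
        -- done
      have bound : ∑ γ ∈ s, (c γ) ^ 2 * (∑ k, (v γ k) ^ 2) ≤ M * ∑ γ ∈ s, (c γ) ^ 2 := by
        rw [Finset.mul_sum]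
        apply Finset.sum_le_sum
        intro γ hγ
        rw [mul_comm M _]
        exact mul_le_mul_of_nonneg_left (hM γ hγ) (sq_nonneg _)
      nlinarith [Finset.sum_nonneg (fun k (_ : k ∈ Finset.univ) => sq_nonneg (M * x k - ∑ γ ∈ s, c γ * v γ k))]
    nlinarith [key, hMpos]

lemma LiLi.key {n : ℕ} (μ : Fin n → ℝ) (t : ℝ) (ht : t = ∑ k, (μ k) ^ 2) :
    ∑ i, ∑ j, max ((μ i - μ j) ^ 2 - t) 0 ≤ 2 * t := by
  have ht0 : 0 ≤ t := ht ▸ Finset.sum_nonneg fun k _ => sq_nonneg _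
  set e : Fin n → Fin n → ℝ := fun i j => max ((μ i - μ j) ^ 2 - t) 0 with he
  have he0 : ∀ i j, 0 ≤ e i j := fun i j => le_max_right _ _
  have hesymm : ∀ i j, e i j = e j i := by
    intro i j; simp only [he]; ring_nf
  have hdiag : ∀ i, e i i = 0 := by
    intro i; simp only [he]
    apply max_eq_right; nlinarith
  have hgt : ∀ i j, e i j ≠ 0 → t < (μ i - μ j) ^ 2 := by
    intro i j hij
    by_contra hcon; push_neg at hcon
    exact hij (max_eq_right (by linarith))
  have hne : ∀ i j, e i j ≠ 0 → i ≠ j := by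
    intro i j hij h; exact hij (h ▸ hdiag j)
  have pairsq : ∀ i j, i ≠ j → (μ i) ^ 2 + (μ j) ^ 2 ≤ t := by
    intro i j hij
    have hsub : ∑ k ∈ ({i, j} : Finset (Fin n)), (μ k) ^ 2 ≤ t := by
      rw [ht]
      exact Finset.sum_le_sum_of_subset_of_nonneg (Finset.subset_univ _)
        (fun k _ _ => sq_nonneg _)
    rwa [Finset.sum_pair hij] at hsub
  have hsign : ∀ i j, e i j ≠ 0 → μ i * μ j < 0 := by
    intro i j hij
    have h1 := hgt i j hij
    have h2 := pairsq i j (hne i j hij)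
    nlinarith
  have hdisj : ∀ i j k l, e i j ≠ 0 → e k l ≠ 0 →
      i ≠ k → i ≠ l → j ≠ k → j ≠ l → False := by
    intro i j k l hij hkl hik hil hjk hjl
    have hijne := hne i j hij
    have hklne := hne k l hkl
    have hsub : ∑ x ∈ ({i, j, k, l} : Finset (Fin n)), (μ x) ^ 2 ≤ t := by
      rw [ht]
      exact Finset.sum_le_sum_of_subset_of_nonneg (Finset.subset_univ _)
        (fun x _ _ => sq_nonneg _)
    rw [Finset.sum_insert (by simp [hijne, hik, hil]),
        Finset.sum_insert (by simp [hjk, hjl]), Finset.sum_pair hklne] at hsub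
    have g1 := hgt i j hij
    have g2 := hgt k l hkl
    nlinarith [sq_nonneg (μ i + μ j), sq_nonneg (μ k + μ l)]
  by_cases hex : ∀ i j, e i j = 0
  · have : ∑ i, ∑ j, e i j = 0 :=
      Finset.sum_eq_zero fun i _ => Finset.sum_eq_zero fun j _ => hex i j
    rw [this]; linarith
  · push_neg at hex
    obtain ⟨i0, j0, h0⟩ := hex
    have hstar : ∃ m, ∀ i j, e i j ≠ 0 → i = m ∨ j = m := by
      by_cases hc : ∀ i j, e i j ≠ 0 → i = i0 ∨ j = i0
      · exact ⟨i0, hc⟩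
      · push_neg at hc
        obtain ⟨k, l, hkl, hki0, hli0⟩ := hc
        refine ⟨j0, ?_⟩
        have hinter : k = j0 ∨ l = j0 := by
          by_contra hcon; push_neg at hcon
          exact hdisj i0 j0 k l h0 hkl (Ne.symm hki0) (Ne.symm hli0)
            (Ne.symm hcon.1) (Ne.symm hcon.2)
        have sgn0 : μ i0 * μ j0 < 0 := hsign i0 j0 h0
        intro x y hxy
        by_contra hcon2; push_neg at hcon2
        obtain ⟨hxj0, hyj0⟩ := hcon2
        have h1 : x = i0 ∨ y = i0 := by
          by_contra hc3; push_neg at hc3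
          exact hdisj x y i0 j0 hxy h0 hc3.1 hxj0 hc3.2 hyj0
        rcases hinter with hk | hl
        · subst hk
          have sgn1 : μ k * μ l < 0 := hsign k l hkl
          have h2 : x = l ∨ y = l := by
            by_contra hc4; push_neg at hc4
            exact hdisj x y k l hxy hkl hxj0 hc4.1 hyj0 hc4.2
          have hprod : 0 < (μ i0 * μ k) * (μ k * μ l) := mul_pos_of_neg_of_neg sgn0 sgn1
          rcases h1 with h1 | h1 <;> rcases h2 with h2 | h2
          · exact hli0 (by rw [← h2]; exact h1)
          · subst h1; subst h2
            have := hsign x y hxy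
            nlinarith [sq_nonneg (μ k)]
          · subst h1; subst h2
            have := hsign x y hxy
            nlinarith [sq_nonneg (μ k)]
          · exact hli0 (by rw [← h2, h1])
        · subst hl
          have sgn1 : μ k * μ l < 0 := hsign k l hkl
          have h2 : x = k ∨ y = k := by
            by_contra hc4; push_neg at hc4
            exact hdisj x y k l hxy hkl hc4.1 hxj0 hc4.2 hyj0
          have hprod : 0 < (μ i0 * μ l) * (μ k * μ l) := mul_pos_of_neg_of_neg sgn0 sgn1
          rcases h1 with h1 | h1 <;> rcases h2 with h2 | h2
          · exact hki0 (by rw [← h2, h1])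
          · subst h1; subst h2
            have := hsign x y hxy
            nlinarith [sq_nonneg (μ l)]
          · subst h1; subst h2
            have := hsign x y hxy
            nlinarith [sq_nonneg (μ l)]
          · exact hki0 (by rw [← h2, h1])
    obtain ⟨m, hm⟩ := hstar
    have hzero : ∀ i j, i ≠ m → j ≠ m → e i j = 0 := by
      intro i j him hjm
      by_contra hz
      rcases hm i j hz with h | h
      · exact him h
      · exact hjm h
    have hrow : ∑ i, ∑ j, e i j = 2 * ∑ j ∈ Finset.univ.erase m, e m j := by
      rw [← Finset.sum_erase_add _ _ (Finset.mem_univ m)]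
      have hrest : ∀ i ∈ Finset.univ.erase m, ∑ j, e i j = e m i := by
        intro i hi
        have him : i ≠ m := (Finset.mem_erase.mp hi).1
        rw [Finset.sum_eq_single_of_mem m (Finset.mem_univ m)]
        · exact hesymm i m
        · intro j _ hjm; exact hzero i j him hjm
      rw [Finset.sum_congr rfl hrest]
      have hlast : ∑ j, e m j = ∑ j ∈ Finset.univ.erase m, e m j := by
        rw [← Finset.sum_erase_add _ _ (Finset.mem_univ m), hdiag, add_zero]
      rw [hlast]; ring
    have hbound : ∑ j ∈ Finset.univ.erase m, e m j ≤ t := by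
      have hsplit : ∑ j ∈ Finset.univ.erase m, e m j
          = ∑ j ∈ (Finset.univ.erase m).filter (fun j => e m j ≠ 0), e m j :=
        (Finset.sum_filter_ne_zero _).symm
      set J := (Finset.univ.erase m).filter (fun j => e m j ≠ 0) with hJ
      have hmJ : m ∉ J := by simp [hJ]
      have hval : ∀ j ∈ J, e m j = (μ m - μ j) ^ 2 - t := by
        intro j hj
        have hjne : e m j ≠ 0 := (Finset.mem_filter.mp hj).2
        exact max_eq_left (le_of_lt (by linarith [hgt m j hjne]))
      rw [hsplit, Finset.sum_congr rfl hval]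
      set r := (J.card : ℝ) with hr
      set σ := ∑ j ∈ J, μ j with hσ
      set Q := ∑ j ∈ J, (μ j) ^ 2 with hQ
      have hexp : ∑ j ∈ J, ((μ m - μ j) ^ 2 - t)
          = r * (μ m) ^ 2 - 2 * μ m * σ + Q - r * t := by
        have hterm : ∀ j ∈ J, (μ m - μ j) ^ 2 - t
            = (μ m) ^ 2 - 2 * μ m * μ j + (μ j) ^ 2 - t := by
          intro j _; ring
        rw [Finset.sum_congr rfl hterm]
        rw [Finset.sum_sub_distrib, Finset.sum_add_distrib, Finset.sum_sub_distrib,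
          Finset.sum_const, Finset.sum_const, ← Finset.mul_sum, nsmul_eq_mul, nsmul_eq_mul]
      rw [hexp]
      have hCS : σ ^ 2 ≤ r * Q := sq_sum_le_card_mul_sum_sq
      have hsubT : (μ m) ^ 2 + Q ≤ t := by
        have hsub : ∑ k ∈ insert m J, (μ k) ^ 2 ≤ t := by
          rw [ht]
          exact Finset.sum_le_sum_of_subset_of_nonneg (Finset.subset_univ _)
            (fun k _ _ => sq_nonneg _)
        rwa [Finset.sum_insert hmJ] at hsub
      have hAM : -(2 * μ m * σ) ≤ (μ m) ^ 2 + σ ^ 2 := by nlinarith [sq_nonneg (μ m + σ)]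
      have hr0 : (0:ℝ) ≤ r := by rw [hr]; exact_mod_cast Nat.zero_le _
      have hmain : (r + 1) * ((μ m) ^ 2 + Q) ≤ (r + 1) * t :=
        mul_le_mul_of_nonneg_left hsubT (by linarith)
      nlinarith
    rw [hrow]; linarith

lemma LiLi.final {p : ℕ} (hp : 2 ≤ p) (lam : Fin p → ℝ) (h0 : ∀ γ, 0 ≤ lam γ)
    (Mx : Fin p → ℝ) (hMx : ∀ γ, ∃ δ ∈ Finset.univ.erase γ, Mx γ = lam δ) :
    ∑ γ, lam γ * Mx γ ≤ (∑ γ, lam γ) ^ 2 / 2 := by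
  have hne : (Finset.univ : Finset (Fin p)).Nonempty := by
    have : 0 < p := by omega
    exact ⟨⟨0, this⟩, Finset.mem_univ _⟩
  obtain ⟨γ₁, _, hmax⟩ := Finset.exists_max_image Finset.univ lam hne
  have hmax' : ∀ δ, lam δ ≤ lam γ₁ := fun δ => hmax δ (Finset.mem_univ δ)
  set R := ∑ δ ∈ Finset.univ.erase γ₁, lam δ with hR
  have hS : ∑ γ, lam γ = R + lam γ₁ := (Finset.sum_erase_add _ _ (Finset.mem_univ γ₁)).symm
  have hR0 : 0 ≤ R := Finset.sum_nonneg fun δ _ => h0 δ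
  obtain ⟨δ₁, hδ₁mem, hδ₁⟩ := hMx γ₁
  have hd1 : lam δ₁ ≤ lam γ₁ := hmax' δ₁
  have hd2 : lam δ₁ ≤ R := Finset.single_le_sum (fun δ _ => h0 δ) hδ₁mem
  have hd0 : 0 ≤ lam δ₁ := h0 δ₁
  have hsplit : ∑ γ, lam γ * Mx γ
      = (∑ γ ∈ Finset.univ.erase γ₁, lam γ * Mx γ) + lam γ₁ * Mx γ₁ :=
    (Finset.sum_erase_add _ _ (Finset.mem_univ γ₁)).symm
  have hbound : ∑ γ ∈ Finset.univ.erase γ₁, lam γ * Mx γ ≤ R * lam γ₁ := by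
    rw [hR, Finset.sum_mul]
    apply Finset.sum_le_sum
    intro γ _
    obtain ⟨δ, _, hδ⟩ := hMx γ
    rw [hδ]
    exact mul_le_mul_of_nonneg_left (hmax' δ) (h0 γ)
  rw [hsplit, hS, hδ₁]
  nlinarith [sq_nonneg (lam γ₁ - R), sq_nonneg (lam γ₁ - lam δ₁), sq_nonneg (R - lam δ₁),
    mul_nonneg hR0 (h0 γ₁)]

lemma LiLi.parseval {p : ℕ} (U : Matrix (Fin p) (Fin p) ℝ)
    (hU : ∀ α β, ∑ γ, U α γ * U β γ = if α = β then (1:ℝ) else 0) (x : Fin p → ℝ) :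
    ∑ γ, (∑ α, U α γ * x α) ^ 2 = ∑ α, (x α) ^ 2 := by
  have expand : ∀ γ, (∑ α, U α γ * x α) ^ 2
      = ∑ α, ∑ β, (x α * x β) * (U α γ * U β γ) := by
    intro γ
    rw [sq, Finset.sum_mul_sum]
    apply Finset.sum_congr rfl; intro α _
    apply Finset.sum_congr rfl; intro β _
    ring
  rw [Finset.sum_congr rfl fun γ _ => expand γ, Finset.sum_comm]
  have inner : ∀ α, ∑ γ, ∑ β, (x α * x β) * (U α γ * U β γ) = (x α) ^ 2 := by
    intro α
    rw [Finset.sum_comm]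
    have hterm : ∀ β, ∑ γ, (x α * x β) * (U α γ * U β γ)
        = (x α * x β) * (if α = β then (1:ℝ) else 0) := by
      intro β
      rw [← hU α β, Finset.mul_sum]
    rw [Finset.sum_congr rfl fun β _ => hterm β]
    rw [Finset.sum_eq_single_of_mem α (Finset.mem_univ α)]
    · simp [sq]
    · intro β _ hβ
      simp [Ne.symm hβ]
  rw [Finset.sum_congr rfl fun α _ => inner α]

lemma LiLi.parseval2 {p : ℕ} (U : Matrix (Fin p) (Fin p) ℝ)
    (hU : ∀ α β, ∑ γ, U α γ * U β γ = if α = β then (1:ℝ) else 0)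
    (c : Fin p → Fin p → ℝ) :
    ∑ γ, ∑ δ, (∑ α, ∑ β, U α γ * U β δ * c α β) ^ 2 = ∑ α, ∑ β, (c α β) ^ 2 := by
  have hre : ∀ γ δ, ∑ α, ∑ β, U α γ * U β δ * c α β
      = ∑ α, U α γ * (∑ β, U β δ * c α β) := by
    intro γ δ
    apply Finset.sum_congr rfl; intro α _
    rw [Finset.mul_sum]
    apply Finset.sum_congr rfl; intro β _; ring
  have step1 : ∀ δ, ∑ γ, (∑ α, ∑ β, U α γ * U β δ * c α β) ^ 2
      = ∑ α, (∑ β, U β δ * c α β) ^ 2 := by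
    intro δ
    rw [Finset.sum_congr rfl fun γ _ => by rw [hre γ δ]]
    exact LiLi.parseval U hU _
  rw [Finset.sum_comm, Finset.sum_congr rfl fun δ _ => step1 δ, Finset.sum_comm]
  apply Finset.sum_congr rfl; intro α _
  exact LiLi.parseval U hU _

namespace LiLi

def ip {n : ℕ} (V W : Matrix (Fin n) (Fin n) ℝ) : ℝ := ∑ i, ∑ j, V i j * W i j

lemma ip_self_eq_sum_sq {n : ℕ} (V : Matrix (Fin n) (Fin n) ℝ) :
    ip V V = ∑ i, ∑ j, (V i j) ^ 2 := by
  unfold ip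
  apply Finset.sum_congr rfl; intro i _
  apply Finset.sum_congr rfl; intro j _
  rw [sq]

lemma ip_self_nonneg {n : ℕ} (V : Matrix (Fin n) (Fin n) ℝ) : 0 ≤ ip V V := by
  rw [ip_self_eq_sum_sq]
  exact Finset.sum_nonneg fun i _ => Finset.sum_nonneg fun j _ => sq_nonneg _

/-- The row bound: if `B δ`, `δ ∈ s`, are pairwise orthogonal symmetric matrices with
squared norms bounded by `M`, then the weighted sum of commutator norms with a diagonal
matrix `diag μ` is controlled. -/
lemma row {n p : ℕ} (μ : Fin n → ℝ) (B : Fin p → Matrix (Fin n) (Fin n) ℝ)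
    (s : Finset (Fin p)) (hsym : ∀ δ, (B δ)ᵀ = B δ)
    (horth : ∀ γ ∈ s, ∀ δ ∈ s, γ ≠ δ → ip (B γ) (B δ) = 0)
    (M : ℝ) (hM0 : 0 ≤ M) (hM : ∀ δ ∈ s, ip (B δ) (B δ) ≤ M) :
    ∑ δ ∈ s, ∑ i, ∑ j, ((μ i - μ j) * B δ i j) ^ 2
      ≤ (∑ k, (μ k) ^ 2) * (∑ δ ∈ s, ip (B δ) (B δ)) + (∑ k, (μ k) ^ 2) * M := by
  set t := ∑ k, (μ k) ^ 2 with htdef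
  have ht0 : 0 ≤ t := Finset.sum_nonneg fun k _ => sq_nonneg _
  set e : Fin n → Fin n → ℝ := fun i j => max ((μ i - μ j) ^ 2 - t) 0 with he
  have he0 : ∀ i j, 0 ≤ e i j := fun i j => le_max_right _ _
  have hya : ∀ i j, (μ i - μ j) ^ 2 ≤ t + e i j := by
    intro i j
    have h1 : (μ i - μ j) ^ 2 - t ≤ e i j := le_max_left _ _
    linarith
  -- Bessel step
  have hbes : ∀ i j, i ≠ j → ∑ δ ∈ s, (B δ i j) ^ 2 ≤ M / 2 := by
    intro i j hij
    have := LiLi.bessel (ι := Fin n × Fin n) s (fun δ q => B δ q.1 q.2) M hM0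
      (by
        intro γ hγ δ hδ hne
        have h0 := horth γ hγ δ hδ hne
        show ∑ k : Fin n × Fin n, B γ k.1 k.2 * B δ k.1 k.2 = 0
        calc ∑ k : Fin n × Fin n, B γ k.1 k.2 * B δ k.1 k.2
            = ∑ i, ∑ j, B γ i j * B δ i j := Fintype.sum_prod_type _
          _ = 0 := h0)
      (by
        intro δ hδ
        have hh := hM δ hδ
        rw [ip_self_eq_sum_sq] at hh
        show ∑ q : Fin n × Fin n, (B δ q.1 q.2) ^ 2 ≤ M
        calc ∑ q : Fin n × Fin n, (B δ q.1 q.2) ^ 2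
            = ∑ i, ∑ j, (B δ i j) ^ 2 := Fintype.sum_prod_type _
          _ ≤ M := hh)
      (fun q => (if q = (i, j) then (1:ℝ) else 0) + (if q = (j, i) then (1:ℝ) else 0))
    -- compute inner products with x
    have hxval : ∀ δ, (∑ q : Fin n × Fin n, B δ q.1 q.2 *
        ((if q = (i, j) then (1:ℝ) else 0) + (if q = (j, i) then (1:ℝ) else 0)))
        = 2 * B δ i j := by
      intro δ
      have : ∀ q : Fin n × Fin n, B δ q.1 q.2 *
          ((if q = (i, j) then (1:ℝ) else 0) + (if q = (j, i) then (1:ℝ) else 0))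
          = (if q = (i, j) then B δ q.1 q.2 else 0)
            + (if q = (j, i) then B δ q.1 q.2 else 0) := by
        intro q
        split_ifs <;> ring
      rw [Finset.sum_congr rfl fun q _ => this q, Finset.sum_add_distrib,
        Finset.sum_ite_eq' Finset.univ ((i, j) : Fin n × Fin n),
        Finset.sum_ite_eq' Finset.univ ((j, i) : Fin n × Fin n)]
      simp only [Finset.mem_univ, if_true]
      have hBji : B δ j i = B δ i j := by
        conv_lhs => rw [← hsym δ]
        rfl
      rw [hBji]; ring
    have hxsq : (∑ q : Fin n × Fin n,
        ((if q = (i, j) then (1:ℝ) else 0) + (if q = (j, i) then (1:ℝ) else 0)) ^ 2) = 2 := by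
      have hptwise : ∀ q : Fin n × Fin n,
          ((if q = (i, j) then (1:ℝ) else 0) + (if q = (j, i) then (1:ℝ) else 0)) ^ 2
          = (if q = (i, j) then (1:ℝ) else 0) + (if q = (j, i) then (1:ℝ) else 0) := by
        intro q
        by_cases h1 : q = (i, j) <;> by_cases h2 : q = (j, i)
        · exfalso
          rw [h1] at h2
          have : i = j := congrArg Prod.fst h2
          exact hij this
        · subst h1; simp [h2]
        · subst h2; simp [h1]
        · simp [h1, h2]
      rw [Finset.sum_congr rfl fun q _ => hptwise q, Finset.sum_add_distrib,
        Finset.sum_ite_eq' Finset.univ ((i, j) : Fin n × Fin n),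
        Finset.sum_ite_eq' Finset.univ ((j, i) : Fin n × Fin n)]
      norm_num
    simp only [hxval] at this
    rw [hxsq] at this
    have h4 : ∑ δ ∈ s, (2 * B δ i j) ^ 2 = 4 * ∑ δ ∈ s, (B δ i j) ^ 2 := by
      rw [Finset.mul_sum]
      apply Finset.sum_congr rfl; intro δ _; ring
    rw [h4] at this
    linarith
  -- main chain
  have hkey : ∑ i, ∑ j, e i j ≤ 2 * t := LiLi.key μ t htdef
  have step1 : ∑ δ ∈ s, ∑ i, ∑ j, ((μ i - μ j) * B δ i j) ^ 2
      ≤ ∑ δ ∈ s, (t * ip (B δ) (B δ) + ∑ i, ∑ j, e i j * (B δ i j) ^ 2) := by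
    apply Finset.sum_le_sum
    intro δ _
    have hpt : ∀ i j, ((μ i - μ j) * B δ i j) ^ 2 ≤ (t + e i j) * (B δ i j) ^ 2 := by
      intro i j
      have := hya i j
      have hB2 : 0 ≤ (B δ i j) ^ 2 := sq_nonneg _
      calc ((μ i - μ j) * B δ i j) ^ 2 = (μ i - μ j) ^ 2 * (B δ i j) ^ 2 := by ring
        _ ≤ (t + e i j) * (B δ i j) ^ 2 := mul_le_mul_of_nonneg_right this hB2
    calc ∑ i, ∑ j, ((μ i - μ j) * B δ i j) ^ 2
        ≤ ∑ i, ∑ j, (t + e i j) * (B δ i j) ^ 2 :=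
          Finset.sum_le_sum fun i _ => Finset.sum_le_sum fun j _ => hpt i j
      _ = t * ip (B δ) (B δ) + ∑ i, ∑ j, e i j * (B δ i j) ^ 2 := by
          rw [ip_self_eq_sum_sq, Finset.mul_sum]
          rw [← Finset.sum_add_distrib]
          apply Finset.sum_congr rfl; intro i _
          rw [Finset.mul_sum, ← Finset.sum_add_distrib]
          apply Finset.sum_congr rfl; intro j _
          ring
  have step2 : ∑ δ ∈ s, (t * ip (B δ) (B δ) + ∑ i, ∑ j, e i j * (B δ i j) ^ 2)
      = t * (∑ δ ∈ s, ip (B δ) (B δ)) + ∑ i, ∑ j, e i j * (∑ δ ∈ s, (B δ i j) ^ 2) := by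
    rw [Finset.sum_add_distrib, Finset.mul_sum]
    congr 1
    rw [Finset.sum_comm]
    apply Finset.sum_congr rfl; intro i _
    rw [Finset.sum_comm]
    apply Finset.sum_congr rfl; intro j _
    rw [Finset.mul_sum]
  have step3 : ∑ i, ∑ j, e i j * (∑ δ ∈ s, (B δ i j) ^ 2) ≤ ∑ i, ∑ j, e i j * (M / 2) := by
    apply Finset.sum_le_sum; intro i _
    apply Finset.sum_le_sum; intro j _
    by_cases hij : i = j
    · have : e i j = 0 := by
        rw [he]
        simp only [hij]
        apply max_eq_right
        nlinarith
      rw [this]; simp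
    · exact mul_le_mul_of_nonneg_left (hbes i j hij) (he0 i j)
  have step4 : ∑ i, ∑ j, e i j * (M / 2) ≤ t * M := by
    have : ∑ i, ∑ j, e i j * (M / 2) = (∑ i, ∑ j, e i j) * (M / 2) := by
      rw [Finset.sum_mul]
      apply Finset.sum_congr rfl; intro i _
      rw [Finset.sum_mul]
    rw [this]
    calc (∑ i, ∑ j, e i j) * (M / 2) ≤ (2 * t) * (M / 2) :=
        mul_le_mul_of_nonneg_right hkey (by linarith)
      _ = t * M := by ring
  linarith

end LiLi

namespace LiLi

lemma ip_eq_trace {n : ℕ} (X Y : Matrix (Fin n) (Fin n) ℝ) :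
    ip X Y = Matrix.trace (X * Yᵀ) := by
  unfold ip
  rw [Matrix.trace]
  apply Finset.sum_congr rfl; intro i _
  rw [Matrix.diag_apply, Matrix.mul_apply]
  apply Finset.sum_congr rfl; intro j _
  rw [Matrix.transpose_apply]

lemma conj_ip {n : ℕ} (W X Y : Matrix (Fin n) (Fin n) ℝ) (hW : W * Wᵀ = 1) :
    ip (Wᵀ * X * W) (Wᵀ * Y * W) = ip X Y := by
  have hcancel : ∀ Z : Matrix (Fin n) (Fin n) ℝ, W * (Wᵀ * Z) = Z := by
    intro Z; rw [← Matrix.mul_assoc, hW, Matrix.one_mul]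
  rw [ip_eq_trace, ip_eq_trace]
  have hT : (Wᵀ * Y * W)ᵀ = Wᵀ * Yᵀ * W := by
    rw [Matrix.transpose_mul, Matrix.transpose_mul, Matrix.transpose_transpose,
      Matrix.mul_assoc]
  rw [hT]
  have hmid : (Wᵀ * X * W) * (Wᵀ * Yᵀ * W) = Wᵀ * (X * Yᵀ) * W := by
    simp only [Matrix.mul_assoc]
    rw [hcancel (Yᵀ * W)]
  rw [hmid, Matrix.trace_mul_cycle, ← Matrix.mul_assoc, hW, Matrix.one_mul]

lemma ip_diagonal_self {n : ℕ} (μ : Fin n → ℝ) :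
    ip (Matrix.diagonal μ) (Matrix.diagonal μ) = ∑ k, (μ k) ^ 2 := by
  unfold ip
  apply Finset.sum_congr rfl; intro i _
  rw [Finset.sum_eq_single_of_mem i (Finset.mem_univ i)]
  · rw [Matrix.diagonal_apply_eq, sq]
  · intro j _ hj
    rw [Matrix.diagonal_apply_ne' _ hj, mul_zero]

lemma core {p n : ℕ} (hp : 2 ≤ p) (D : Fin p → Matrix (Fin n) (Fin n) ℝ)
    (hsym : ∀ γ, (D γ)ᵀ = D γ)
    (horth : ∀ γ δ, γ ≠ δ → ip (D γ) (D δ) = 0) :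
    (∑ γ, ∑ δ, ∑ i, ∑ j, ((D γ * D δ - D δ * D γ) i j) ^ 2)
      + ∑ γ, ∑ δ, (ip (D γ) (D δ)) ^ 2
      ≤ 3 / 2 * (∑ γ, ip (D γ) (D γ)) ^ 2 := by
  set lam : Fin p → ℝ := fun γ => ip (D γ) (D γ) with hlam
  have hlam0 : ∀ γ, 0 ≤ lam γ := fun γ => ip_self_nonneg _
  set S := ∑ γ, lam γ with hS
  have htr : ∑ γ, ∑ δ, (ip (D γ) (D δ)) ^ 2 = ∑ γ, (lam γ) ^ 2 := by
    apply Finset.sum_congr rfl; intro γ _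
    rw [Finset.sum_eq_single_of_mem γ (Finset.mem_univ γ)]
    · intro δ _ hδ
      rw [horth γ δ (Ne.symm hδ)]
      norm_num
  have herasene : ∀ γ : Fin p, (Finset.univ.erase γ).Nonempty := by
    intro γ
    apply Finset.card_pos.mp
    rw [Finset.card_erase_of_mem (Finset.mem_univ γ), Finset.card_univ, Fintype.card_fin]
    omega
  set Mx : Fin p → ℝ := fun γ => (Finset.univ.erase γ).sup' (herasene γ) lam with hMxdef
  have hMxmem : ∀ γ, ∃ δ ∈ Finset.univ.erase γ, Mx γ = lam δ := by
    intro γ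
    obtain ⟨δ, hmem, hval⟩ := Finset.exists_mem_eq_sup' (herasene γ) lam
    exact ⟨δ, hmem, hval⟩
  have hMx0 : ∀ γ, 0 ≤ Mx γ := by
    intro γ
    obtain ⟨δ, _, hval⟩ := hMxmem γ
    rw [hval]; exact hlam0 δ
  have hMxub : ∀ γ, ∀ δ ∈ Finset.univ.erase γ, lam δ ≤ Mx γ :=
    fun γ δ hδ => Finset.le_sup' lam hδ
  have hsum_erase : ∀ γ, ∑ δ ∈ Finset.univ.erase γ, lam δ = S - lam γ := by
    intro γ
    have := Finset.sum_erase_add Finset.univ lam (Finset.mem_univ γ)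
    rw [hS]; linarith
  -- the row bound
  have hrowD : ∀ γ, ∑ δ ∈ Finset.univ.erase γ, (∑ i, ∑ j, ((D γ * D δ - D δ * D γ) i j) ^ 2)
      ≤ lam γ * (S - lam γ) + lam γ * Mx γ := by
    intro γ
    have hherm : (D γ).IsHermitian := by
      rw [Matrix.IsHermitian]
      have : (D γ)ᴴ = (D γ)ᵀ := by ext i j; simp [Matrix.conjTranspose_apply]
      rw [this, hsym]
    set W : Matrix (Fin n) (Fin n) ℝ :=
      (Matrix.IsHermitian.eigenvectorUnitary hherm : Matrix (Fin n) (Fin n) ℝ) with hWdef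
    set μ : Fin n → ℝ := hherm.eigenvalues with hμdef
    have hstT : star W = Wᵀ := by ext i j; simp [Matrix.star_apply]
    have hWWt : W * Wᵀ = 1 := by
      rw [← hstT]
      exact Matrix.mem_unitaryGroup_iff.mp (Matrix.IsHermitian.eigenvectorUnitary hherm).2
    have hdiagspec : Wᵀ * D γ * W = Matrix.diagonal μ := by
      rw [← hstT]
      have := Matrix.IsHermitian.conjStarAlgAut_star_eigenvectorUnitary hherm
      simpa using this
    set E : Fin p → Matrix (Fin n) (Fin n) ℝ := fun δ => Wᵀ * D δ * W with hE
    have hEsym : ∀ δ, (E δ)ᵀ = E δ := by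
      intro δ
      rw [hE]
      show (Wᵀ * D δ * W)ᵀ = Wᵀ * D δ * W
      rw [Matrix.transpose_mul, Matrix.transpose_mul, Matrix.transpose_transpose,
        hsym δ, Matrix.mul_assoc]
    have hipE : ∀ δ ε, ip (E δ) (E ε) = ip (D δ) (D ε) := by
      intro δ ε
      exact conj_ip W (D δ) (D ε) hWWt
    have hEγ : E γ = Matrix.diagonal μ := hdiagspec
    have hlamγ : lam γ = ∑ k, (μ k) ^ 2 := by
      have h1 : lam γ = ip (E γ) (E γ) := (hipE γ γ).symm
      rw [h1, hEγ, ip_diagonal_self]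
    have hcancel : ∀ Z : Matrix (Fin n) (Fin n) ℝ, W * (Wᵀ * Z) = Z := by
      intro Z; rw [← Matrix.mul_assoc, hWWt, Matrix.one_mul]
    have hcomm : ∀ δ, (∑ i, ∑ j, ((D γ * D δ - D δ * D γ) i j) ^ 2)
        = ∑ i, ∑ j, ((μ i - μ j) * (E δ) i j) ^ 2 := by
      intro δ
      have hK : Wᵀ * (D γ * D δ - D δ * D γ) * W
          = Matrix.diagonal μ * E δ - E δ * Matrix.diagonal μ := by
        rw [Matrix.mul_sub, Matrix.sub_mul]
        congr 1
        · calc Wᵀ * (D γ * D δ) * W = (Wᵀ * D γ * W) * (Wᵀ * D δ * W) := by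
                simp only [Matrix.mul_assoc]
                rw [hcancel (D δ * W)]
            _ = Matrix.diagonal μ * E δ := by rw [hdiagspec, hE]
        · calc Wᵀ * (D δ * D γ) * W = (Wᵀ * D δ * W) * (Wᵀ * D γ * W) := by
                simp only [Matrix.mul_assoc]
                rw [hcancel (D γ * W)]
            _ = E δ * Matrix.diagonal μ := by rw [hdiagspec, hE]
      have e1 : ∑ i, ∑ j, ((D γ * D δ - D δ * D γ) i j) ^ 2
          = ip (D γ * D δ - D δ * D γ) (D γ * D δ - D δ * D γ) :=
        (ip_self_eq_sum_sq _).symm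
      have e2 : ip (D γ * D δ - D δ * D γ) (D γ * D δ - D δ * D γ)
          = ip (Wᵀ * (D γ * D δ - D δ * D γ) * W) (Wᵀ * (D γ * D δ - D δ * D γ) * W) :=
        (conj_ip W _ _ hWWt).symm
      rw [e1, e2, hK, ip_self_eq_sum_sq]
      apply Finset.sum_congr rfl; intro i _
      apply Finset.sum_congr rfl; intro j _
      congr 1
      rw [Matrix.sub_apply, Matrix.diagonal_mul, Matrix.mul_diagonal]
      ring
    have hrow := row μ E (Finset.univ.erase γ) hEsym
      (by
        intro a ha b hb hab
        rw [hipE a b]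
        exact horth a b hab)
      (Mx γ) (hMx0 γ)
      (by
        intro δ hδ
        rw [hipE δ δ]
        exact hMxub γ δ hδ)
    rw [Finset.sum_congr rfl fun δ _ => hcomm δ]
    calc ∑ δ ∈ Finset.univ.erase γ, ∑ i, ∑ j, ((μ i - μ j) * (E δ) i j) ^ 2
        ≤ (∑ k, (μ k) ^ 2) * (∑ δ ∈ Finset.univ.erase γ, ip (E δ) (E δ))
          + (∑ k, (μ k) ^ 2) * Mx γ := hrow
      _ = lam γ * (S - lam γ) + lam γ * Mx γ := by
          rw [← hlamγ]
          congr 1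
          · congr 1
            rw [Finset.sum_congr rfl fun δ _ => hipE δ δ]
            exact hsum_erase γ
  -- assemble
  have hcs : ∑ γ, ∑ δ, (∑ i, ∑ j, ((D γ * D δ - D δ * D γ) i j) ^ 2)
      = ∑ γ, ∑ δ ∈ Finset.univ.erase γ, (∑ i, ∑ j, ((D γ * D δ - D δ * D γ) i j) ^ 2) := by
    apply Finset.sum_congr rfl; intro γ _
    rw [← Finset.sum_erase_add _ _ (Finset.mem_univ γ)]
    have : ∑ i, ∑ j, ((D γ * D γ - D γ * D γ) i j) ^ 2 = 0 := by
      rw [sub_self]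
      apply Finset.sum_eq_zero; intro i _
      apply Finset.sum_eq_zero; intro j _
      simp [Matrix.zero_apply]
    rw [this, add_zero]
  have hsum1 : ∑ γ, (lam γ * (S - lam γ) + lam γ * Mx γ) + ∑ γ, (lam γ) ^ 2
      = S ^ 2 + ∑ γ, lam γ * Mx γ := by
    rw [Finset.sum_add_distrib]
    have : ∑ γ, lam γ * (S - lam γ) = S ^ 2 - ∑ γ, (lam γ) ^ 2 := by
      have e1 : ∀ γ, lam γ * (S - lam γ) = lam γ * S - (lam γ) ^ 2 := by intro γ; ring
      rw [Finset.sum_congr rfl fun γ _ => e1 γ, Finset.sum_sub_distrib, ← Finset.sum_mul,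
        ← hS, sq]
    rw [this]; ring
  have hfin : ∑ γ, lam γ * Mx γ ≤ S ^ 2 / 2 := by
    have := LiLi.final hp lam hlam0 Mx hMxmem
    rw [← hS] at this
    exact this
  calc (∑ γ, ∑ δ, ∑ i, ∑ j, ((D γ * D δ - D δ * D γ) i j) ^ 2)
      + ∑ γ, ∑ δ, (ip (D γ) (D δ)) ^ 2
      = (∑ γ, ∑ δ ∈ Finset.univ.erase γ, (∑ i, ∑ j, ((D γ * D δ - D δ * D γ) i j) ^ 2))
        + ∑ γ, (lam γ) ^ 2 := by rw [hcs, htr]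
    _ ≤ (∑ γ, (lam γ * (S - lam γ) + lam γ * Mx γ)) + ∑ γ, (lam γ) ^ 2 := by
        apply add_le_add_left
        exact Finset.sum_le_sum fun γ _ => hrowD γ
    _ = S ^ 2 + ∑ γ, lam γ * Mx γ := hsum1
    _ ≤ S ^ 2 + S ^ 2 / 2 := by linarith
    _ = 3 / 2 * S ^ 2 := by ring
    _ = 3 / 2 * (∑ γ, ip (D γ) (D γ)) ^ 2 := by rw [hS]

end LiLi

namespace LiLi

lemma swap3 {a b : Type*} [Fintype a] [Fintype b] (f : a → a → b → ℝ) :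
    ∑ γ : a, ∑ δ : a, ∑ q : b, f γ δ q = ∑ q : b, ∑ γ : a, ∑ δ : a, f γ δ q := by
  rw [Finset.sum_congr rfl fun γ _ => Finset.sum_comm]
  exact Finset.sum_comm

lemma collapse {n : ℕ} (f : Fin n → Fin n → ℝ) :
    ∑ i, ∑ j, f i j = ∑ q : Fin n × Fin n, f q.1 q.2 :=
  (Fintype.sum_prod_type (f := fun q : Fin n × Fin n => f q.1 q.2)).symm

lemma main {p n : ℕ} (hp : 2 ≤ p) (A : Fin p → Matrix (Fin n) (Fin n) ℝ)
    (hA : ∀ α, (A α)ᵀ = A α) :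
    (∑ α, ∑ β, ∑ i, ∑ j, ((A α * A β - A β * A α) i j) ^ 2)
      + (∑ α, ∑ β, (Matrix.trace (A α * A β)) ^ 2)
    ≤ 3 / 2 * (∑ α, ∑ i, ∑ j, (A α i j) ^ 2) ^ 2 := by
  classical
  set G : Matrix (Fin p) (Fin p) ℝ := Matrix.of fun α β => ip (A α) (A β) with hGdef
  have hGapp : ∀ α β, G α β = ip (A α) (A β) := fun α β => rfl
  have hGsymm : ∀ α β, G α β = G β α := by
    intro α β
    rw [hGapp, hGapp]
    unfold ip
    apply Finset.sum_congr rfl; intro i _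
    apply Finset.sum_congr rfl; intro j _
    ring
  have hGherm : G.IsHermitian := by
    rw [Matrix.IsHermitian]
    ext α β
    rw [Matrix.conjTranspose_apply, star_trivial]
    exact hGsymm β α
  set U : Matrix (Fin p) (Fin p) ℝ :=
    (Matrix.IsHermitian.eigenvectorUnitary hGherm : Matrix (Fin p) (Fin p) ℝ) with hUdef
  set d : Fin p → ℝ := hGherm.eigenvalues with hddef
  have hstT : star U = Uᵀ := by ext i j; simp [Matrix.star_apply]
  have hUUt : U * Uᵀ = 1 := by
    rw [← hstT]
    exact Matrix.mem_unitaryGroup_iff.mp (Matrix.IsHermitian.eigenvectorUnitary hGherm).2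
  have hU1 : ∀ α β, ∑ γ, U α γ * U β γ = if α = β then (1:ℝ) else 0 := by
    intro α β
    have := congrFun (congrFun hUUt α) β
    rw [Matrix.mul_apply] at this
    rw [← Matrix.one_apply (i := α) (j := β), ← this]
    apply Finset.sum_congr rfl; intro γ _
    rw [Matrix.transpose_apply]
  have hdiagG : Uᵀ * G * U = Matrix.diagonal d := by
    rw [← hstT]
    have := Matrix.IsHermitian.conjStarAlgAut_star_eigenvectorUnitary hGherm
    simpa using this
  -- the rotated family
  set D : Fin p → Matrix (Fin n) (Fin n) ℝ :=
    fun γ => Matrix.of fun i j => ∑ α, U α γ * A α i j with hDdef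
  have hDapp : ∀ γ i j, D γ i j = ∑ α, U α γ * A α i j := fun γ i j => rfl
  have hDsym : ∀ γ, (D γ)ᵀ = D γ := by
    intro γ
    ext i j
    rw [Matrix.transpose_apply, hDapp, hDapp]
    apply Finset.sum_congr rfl; intro α _
    congr 1
    have := congrFun (congrFun (hA α) i) j
    rw [Matrix.transpose_apply] at this
    exact this
  -- ip of rotated family
  have hipD : ∀ γ δ, ip (D γ) (D δ) = ∑ α, ∑ β, U α γ * U β δ * G α β := by
    intro γ δ
    unfold ip
    rw [collapse]
    have step : ∀ q : Fin n × Fin n, D γ q.1 q.2 * D δ q.1 q.2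
        = ∑ α, ∑ β, U α γ * U β δ * (A α q.1 q.2 * A β q.1 q.2) := by
      intro q
      rw [hDapp, hDapp, Finset.sum_mul_sum]
      apply Finset.sum_congr rfl; intro α _
      apply Finset.sum_congr rfl; intro β _
      ring
    rw [Finset.sum_congr rfl fun q _ => step q]
    rw [Finset.sum_comm]
    apply Finset.sum_congr rfl; intro α _
    rw [Finset.sum_comm]
    apply Finset.sum_congr rfl; intro β _
    rw [← Finset.mul_sum, hGapp]
    congr 1
    rw [ip, collapse]
  have horthD : ∀ γ δ, γ ≠ δ → ip (D γ) (D δ) = 0 := by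
    intro γ δ hne
    have h1 : ip (D γ) (D δ) = (Uᵀ * G * U) γ δ := by
      rw [hipD]
      rw [Matrix.mul_apply]
      have : ∀ b, (Uᵀ * G) γ b * U b δ = ∑ α, U α γ * U b δ * G α b := by
        intro b
        rw [Matrix.mul_apply, Finset.sum_mul]
        apply Finset.sum_congr rfl; intro α _
        rw [Matrix.transpose_apply]; ring
      rw [Finset.sum_congr rfl fun b _ => this b, Finset.sum_comm]
    rw [h1, hdiagG]
    exact Matrix.diagonal_apply_ne d hne
  -- transfers
  have tS : ∑ γ, ip (D γ) (D γ) = ∑ α, ip (A α) (A α) := by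
    have e1 : ∀ γ, ip (D γ) (D γ) = ∑ q : Fin n × Fin n, (∑ α, U α γ * A α q.1 q.2) ^ 2 := by
      intro γ
      rw [ip, collapse]
      apply Finset.sum_congr rfl; intro q _
      rw [hDapp, sq]
    rw [Finset.sum_congr rfl fun γ _ => e1 γ, Finset.sum_comm]
    have e2 : ∀ q : Fin n × Fin n, ∑ γ, (∑ α, U α γ * A α q.1 q.2) ^ 2
        = ∑ α, (A α q.1 q.2) ^ 2 := by
      intro q
      exact LiLi.parseval U hU1 _
    rw [Finset.sum_congr rfl fun q _ => e2 q, Finset.sum_comm]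
    apply Finset.sum_congr rfl; intro α _
    rw [ip_self_eq_sum_sq, collapse]
  have tTr : ∑ γ, ∑ δ, (ip (D γ) (D δ)) ^ 2 = ∑ α, ∑ β, (G α β) ^ 2 := by
    rw [Finset.sum_congr rfl fun γ _ => Finset.sum_congr rfl fun δ _ => by rw [hipD γ δ]]
    exact LiLi.parseval2 U hU1 G
  have tCs : ∑ γ, ∑ δ, ∑ i, ∑ j, ((D γ * D δ - D δ * D γ) i j) ^ 2
      = ∑ α, ∑ β, ∑ i, ∑ j, ((A α * A β - A β * A α) i j) ^ 2 := by
    have hprod : ∀ γ δ i j, (D γ * D δ) i j = ∑ α, ∑ β, U α γ * U β δ * ((A α * A β) i j) := by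
      intro γ δ i j
      rw [Matrix.mul_apply]
      have step : ∀ k, D γ i k * D δ k j
          = ∑ α, ∑ β, U α γ * U β δ * (A α i k * A β k j) := by
        intro k
        rw [hDapp, hDapp, Finset.sum_mul_sum]
        apply Finset.sum_congr rfl; intro α _
        apply Finset.sum_congr rfl; intro β _
        ring
      rw [Finset.sum_congr rfl fun k _ => step k, Finset.sum_comm]
      apply Finset.sum_congr rfl; intro α _
      rw [Finset.sum_comm]
      apply Finset.sum_congr rfl; intro β _
      rw [← Finset.mul_sum, Matrix.mul_apply]
    have hbil : ∀ γ δ i j, (D γ * D δ - D δ * D γ) i j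
        = ∑ α, ∑ β, U α γ * U β δ * ((A α * A β - A β * A α) i j) := by
      intro γ δ i j
      rw [Matrix.sub_apply, hprod, hprod]
      have swapped : (∑ α, ∑ β, U α δ * U β γ * ((A α * A β) i j))
          = ∑ α, ∑ β, U α γ * U β δ * ((A β * A α) i j) := by
        rw [Finset.sum_comm]
        apply Finset.sum_congr rfl; intro α _
        apply Finset.sum_congr rfl; intro β _
        ring
      rw [swapped, ← Finset.sum_sub_distrib]
      apply Finset.sum_congr rfl; intro α _
      rw [← Finset.sum_sub_distrib]
      apply Finset.sum_congr rfl; intro β _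
      rw [Matrix.sub_apply]
      ring
    -- collapse (i,j) and apply parseval2 pointwise
    have e1 : ∀ γ δ, ∑ i, ∑ j, ((D γ * D δ - D δ * D γ) i j) ^ 2
        = ∑ q : Fin n × Fin n, (∑ α, ∑ β, U α γ * U β δ * ((A α * A β - A β * A α) q.1 q.2)) ^ 2 := by
      intro γ δ
      rw [collapse]
      apply Finset.sum_congr rfl; intro q _
      rw [hbil]
    rw [Finset.sum_congr rfl fun γ _ => Finset.sum_congr rfl fun δ _ => e1 γ δ]
    rw [swap3]
    have e2 : ∀ q : Fin n × Fin n,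
        ∑ γ, ∑ δ, (∑ α, ∑ β, U α γ * U β δ * ((A α * A β - A β * A α) q.1 q.2)) ^ 2
        = ∑ α, ∑ β, (((A α * A β - A β * A α) q.1 q.2)) ^ 2 := by
      intro q
      exact LiLi.parseval2 U hU1 _
    rw [Finset.sum_congr rfl fun q _ => e2 q, ← swap3]
    apply Finset.sum_congr rfl; intro α _
    apply Finset.sum_congr rfl; intro β _
    rw [collapse]
  -- bridges to the original statement
  have htrace : ∀ α β, Matrix.trace (A α * A β) = G α β := by
    intro α β
    rw [Matrix.trace, hGapp]
    unfold ip
    apply Finset.sum_congr rfl; intro i _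
    rw [Matrix.diag_apply, Matrix.mul_apply]
    apply Finset.sum_congr rfl; intro k _
    congr 1
    have := congrFun (congrFun (hA β) k) i
    rw [Matrix.transpose_apply] at this
    exact this.symm
  have hrhs : ∑ α, ∑ i, ∑ j, (A α i j) ^ 2 = ∑ α, ip (A α) (A α) := by
    apply Finset.sum_congr rfl; intro α _
    rw [ip_self_eq_sum_sq]
  -- final chain
  have hcore := LiLi.core hp D hDsym horthD
  calc (∑ α, ∑ β, ∑ i, ∑ j, ((A α * A β - A β * A α) i j) ^ 2)
      + (∑ α, ∑ β, (Matrix.trace (A α * A β)) ^ 2)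
      = (∑ γ, ∑ δ, ∑ i, ∑ j, ((D γ * D δ - D δ * D γ) i j) ^ 2)
        + ∑ γ, ∑ δ, (ip (D γ) (D δ)) ^ 2 := by
        rw [tCs, tTr]
        congr 1
        apply Finset.sum_congr rfl; intro α _
        apply Finset.sum_congr rfl; intro β _
        rw [htrace]
    _ ≤ 3 / 2 * (∑ γ, ip (D γ) (D γ)) ^ 2 := hcore
    _ = 3 / 2 * (∑ α, ∑ i, ∑ j, (A α i j) ^ 2) ^ 2 := by rw [tS, hrhs]

end LiLi

/-- Li–Li matrix inequality: for `p ≥ 2` real symmetric `n × n` matrices,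
`Σ_{α,β} ‖[A_α, A_β]‖² + Σ_{α,β} (tr (A_α A_β))² ≤ (3/2) (Σ_α ‖A_α‖²)²`. -/
theorem stmt_0 (p n : ℕ) (hp : 2 ≤ p) (hn : 1 ≤ n)
    (A : Fin p → Matrix (Fin n) (Fin n) ℝ)
    (hA : ∀ α, (A α)ᵀ = A α) :
    (∑ α, ∑ β, ∑ i, ∑ j, ((A α * A β - A β * A α) i j) ^ 2)
      + (∑ α, ∑ β, (Matrix.trace (A α * A β)) ^ 2)
    ≤ 3 / 2 * (∑ α, ∑ i, ∑ j, (A α i j) ^ 2) ^ 2 :=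
  LiLi.main hp A hA
end

section
/- Let n ≥ 1 and q ≥ 1 be integers, let λ̊_1, …, λ̊_n be real numbers, and let B_1, …, B_q be real symmetric n×n matrices. Then Σ_{α=1}^q (Σ_i λ̊_i (B_α)_{ii})² + Σ_{α=1}^q Σ_{i≠j} (λ̊_i − λ̊_j)² ((B_α)_{ij})² ≤ 2 (Σ_i λ̊_i²) (Σ_{α=1}^q ‖B_α‖²). -/
/-!
The inequality holds matrix by matrix. Cauchy–Schwarz bounds the
diagonal term by `(∑ λᵢ²) ∑ Aᵢᵢ²`, and for `i ≠ j` one has `(λᵢ - λⱼ)² ≤ 2(λᵢ² + λⱼ²) ≤ 2 ∑ λₖ²`;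
adding the two bounds gives at most `2 (∑ λₖ²)` times the squared Frobenius norm of `A`.
-/

open scoped BigOperators
open Matrix

section

variable {ι : Type*} [Fintype ι] [DecidableEq ι]

lemma sq_sub_le_two_mul_sum_sq (lam : ι → ℝ) {i j : ι} (hij : i ≠ j) :
    (lam i - lam j) ^ 2 ≤ 2 * ∑ k, lam k ^ 2 := by
  have hpair : lam i ^ 2 + lam j ^ 2 ≤ ∑ k, lam k ^ 2 := by
    simpa [Finset.sum_pair hij] using
      Finset.sum_le_univ_sum_of_nonneg (s := {i, j}) (f := fun k => lam k ^ 2)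
        fun k => sq_nonneg _
  nlinarith [sq_nonneg (lam i + lam j)]

lemma sum_sq_diag_add_sum_sq_offDiag (A : Matrix ι ι ℝ) :
    ∑ i, A i i ^ 2 + ∑ i, ∑ j, (if i ≠ j then A i j ^ 2 else 0) = ∑ i, ∑ j, A i j ^ 2 := by
  rw [← Finset.sum_add_distrib]
  refine Finset.sum_congr rfl fun i _ => ?_
  simp only [ne_comm (a := i), Finset.sum_ite, Finset.filter_ne', Finset.sum_const_zero, add_zero]
  exact Finset.add_sum_erase _ (fun j => A i j ^ 2) (Finset.mem_univ i)

lemma sq_weighted_trace_add_offDiag_le (lam : ι → ℝ) (A : Matrix ι ι ℝ) :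
    (∑ i, lam i * A i i) ^ 2
        + ∑ i, ∑ j, (if i ≠ j then (lam i - lam j) ^ 2 * A i j ^ 2 else 0)
      ≤ 2 * (∑ i, lam i ^ 2) * ∑ i, ∑ j, A i j ^ 2 := by
  set S := ∑ i, lam i ^ 2
  have hS : 0 ≤ S := Finset.sum_nonneg fun i _ => sq_nonneg _
  have hdiag : (∑ i, lam i * A i i) ^ 2 ≤ 2 * S * ∑ i, A i i ^ 2 := calc
    _ ≤ S * ∑ i, A i i ^ 2 := Finset.sum_mul_sq_le_sq_mul_sq _ _ _
    _ ≤ 2 * S * ∑ i, A i i ^ 2 := by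
      have := Finset.sum_nonneg fun i (_ : i ∈ Finset.univ) => sq_nonneg (A i i)
      nlinarith
  have hoff : ∑ i, ∑ j, (if i ≠ j then (lam i - lam j) ^ 2 * A i j ^ 2 else 0)
      ≤ 2 * S * ∑ i, ∑ j, (if i ≠ j then A i j ^ 2 else 0) := by
    simp only [Finset.mul_sum, mul_ite, mul_zero]
    gcongr with i _ j _
    split_ifs with hij
    · exact mul_le_mul_of_nonneg_right (sq_sub_le_two_mul_sum_sq lam hij) (sq_nonneg _)
    · rfl
  rw [← sum_sq_diag_add_sum_sq_offDiag A, mul_add]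
  exact add_le_add hdiag hoff

end

theorem stmt_2_general (n q : ℕ)
    (lam : Fin n → ℝ)
    (B : Fin q → Matrix (Fin n) (Fin n) ℝ) :
    (∑ α, (∑ i, lam i * B α i i) ^ 2)
      + (∑ α, ∑ i, ∑ j, if i ≠ j then (lam i - lam j) ^ 2 * (B α i j) ^ 2 else 0)
    ≤ 2 * (∑ i, (lam i) ^ 2) * (∑ α, ∑ i, ∑ j, (B α i j) ^ 2) := by
  rw [← Finset.sum_add_distrib, Finset.mul_sum]
  exact Finset.sum_le_sum fun α _ => sq_weighted_trace_add_offDiag_le lam (B α)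

/-- `Σ_α (Σ_i λ̊_i (B_α)_{ii})² + Σ_α Σ_{i≠j} (λ̊_i − λ̊_j)² ((B_α)_{ij})²
      ≤ 2 (Σ_i λ̊_i²)(Σ_α ‖B_α‖²)`. -/
theorem stmt_2 (n q : ℕ) (hn : 1 ≤ n) (hq : 1 ≤ q)
    (lam : Fin n → ℝ)
    (B : Fin q → Matrix (Fin n) (Fin n) ℝ)
    (hB : ∀ α, (B α)ᵀ = B α) :
    (∑ α, (∑ i, lam i * B α i i) ^ 2)
      + (∑ α, ∑ i, ∑ j, if i ≠ j then (lam i - lam j) ^ 2 * (B α i j) ^ 2 else 0)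
    ≤ 2 * (∑ i, (lam i) ^ 2) * (∑ α, ∑ i, ∑ j, (B α i j) ^ 2) :=
  stmt_2_general n q lam B
end

section
/- Let p ≥ 2 and n ≥ 1 be integers, and let A_1, …, A_p be real symmetric n×n matrices such that A_1 is diagonal and tr(A_α) = 0 for all α ≥ 2. Set H = tr(A_1), |h|² = Σ_α ‖A_α‖², |h̊|² = |h|² − H²/n, P = Σ_{α≥2} ‖A_α‖², R₁ = Σ_{α,β} (Σ_{i,j} (A_α)_{ij}(A_β)_{ij})² + Σ_{α,β} ‖A_α A_β − A_β A_α‖², and ξ = 2/(4 − sgn(p−2)) (so ξ⁻¹ = 2 if p = 2 and ξ⁻¹ = 3/2 if p ≥ 3). Then R₁ ≤ |h|⁴ + (2|h̊|² − (2/n)H²)·P − ξ⁻¹·P². -/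
/-!
Write `⟪·, ·⟫` for the Frobenius inner product and split off the diagonal matrix `A₁`. For a
traceless `B`, replacing `A₁` by its traceless part changes neither `⟪A₁, B⟫` nor `[A₁, B]`, and
entrywise `(aᵢ - aⱼ)² ≤ 2 Σₖ aₖ²` gives `⟪A₁, B⟫² + ‖[A₁, B]‖² ≤ 2 (‖A₁‖² - H²/n) ‖B‖²`. The block of
the remaining matrices is `P²` when `p = 2`, and otherwise is bounded by the Li–Li inequality
`Σ ⟪B_γ, B_δ⟫² + Σ ‖[B_γ, B_δ]‖² ≤ (3/2) (Σ ‖B_γ‖²)²` for symmetric matrices.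

Li–Li: an orthogonal change of the family diagonalizes its Gram matrix and leaves all three sums
unchanged, so the `B_γ` may be taken mutually orthogonal. Then Lu's estimate
`Σ_δ ‖[A, C_δ]‖² ≤ ‖A‖² (Σ_δ ‖C_δ‖² + max_δ ‖C_δ‖²)` for mutually orthogonal symmetric `C_δ` applies
to each `B_γ`. For diagonal `A` its left side is the Laplacian form `Σ cᵢⱼ (aᵢ - aⱼ)²` of a weighted
graph, bounded by the largest sum of two adjacent vertex degrees; those degrees are controlled by
Bessel's inequality for the test matrices `Eᵢⱼ + Eⱼᵢ`.
-/

attribute [local instance] LieRing.ofAssociativeRing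

lemma sub_sq_le_mul_div_add_div (a b : ℝ) {s t : ℝ} (hs : 0 < s) (ht : 0 < t) :
    (a - b) ^ 2 ≤ (s + t) * (a ^ 2 / s + b ^ 2 / t) := by
  rw [div_add_div _ _ hs.ne' ht.ne', mul_div_assoc', le_div_iff₀ (by positivity)]
  nlinarith [sq_nonneg (t * a + s * b)]

/-- Anderson–Morley type bound for the Laplacian form of a weighted (directed) graph. -/
lemma sum_mul_sub_sq_le {m : Type*} [Fintype m] {c : m → m → ℝ} (hc : ∀ i j, 0 ≤ c i j) {K : ℝ}
    (hK0 : 0 ≤ K) (hK : ∀ i j, i ≠ j → ∑ k, c i k + ∑ k, c k j ≤ K) (x : m → ℝ) :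
    ∑ i, ∑ j, c i j * (x i - x j) ^ 2 ≤ 2 * K * ∑ i, x i ^ 2 := by
  set r := fun i => ∑ k, c i k
  set s := fun j => ∑ k, c k j
  have hr : ∀ i, 0 ≤ r i := fun i => Finset.sum_nonneg fun k _ => hc i k
  have hs : ∀ j, 0 ≤ s j := fun j => Finset.sum_nonneg fun k _ => hc k j
  have hterm : ∀ i j, c i j * (x i - x j) ^ 2 ≤
      K * (c i j * (x i ^ 2 / r i)) + K * (c i j * (x j ^ 2 / s j)) := by
    intro i j
    have hrhs : 0 ≤ K * (c i j * (x i ^ 2 / r i)) + K * (c i j * (x j ^ 2 / s j)) :=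
      add_nonneg (mul_nonneg hK0 (mul_nonneg (hc i j) (div_nonneg (sq_nonneg _) (hr i))))
        (mul_nonneg hK0 (mul_nonneg (hc i j) (div_nonneg (sq_nonneg _) (hs j))))
    rcases eq_or_ne i j with rfl | hij
    · rwa [sub_self, zero_pow two_ne_zero, mul_zero]
    rcases (hc i j).eq_or_lt with h0 | hpos
    · simp [← h0]
    have hri : 0 < r i :=
      hpos.trans_le (Finset.single_le_sum (fun k _ => hc i k) (Finset.mem_univ j))
    have hsj : 0 < s j :=
      hpos.trans_le (Finset.single_le_sum (fun k _ => hc k j) (Finset.mem_univ i))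
    calc c i j * (x i - x j) ^ 2
        ≤ c i j * ((r i + s j) * (x i ^ 2 / r i + x j ^ 2 / s j)) :=
          mul_le_mul_of_nonneg_left (sub_sq_le_mul_div_add_div _ _ hri hsj) hpos.le
      _ ≤ c i j * (K * (x i ^ 2 / r i + x j ^ 2 / s j)) := by
          gcongr
          exact hK i j hij
      _ = _ := by ring
  have hrow : ∀ i, ∑ j, c i j * (x i ^ 2 / r i) ≤ x i ^ 2 := fun i => by
    rw [← Finset.sum_mul]
    rcases eq_or_ne (r i) 0 with h | h
    · rw [show ∑ j, c i j = r i from rfl, h, zero_mul]; positivity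
    · rw [mul_div_cancel₀ _ h]
  have hcol : ∀ j, ∑ i, c i j * (x j ^ 2 / s j) ≤ x j ^ 2 := fun j => by
    rw [← Finset.sum_mul]
    rcases eq_or_ne (s j) 0 with h | h
    · rw [show ∑ i, c i j = s j from rfl, h, zero_mul]; positivity
    · rw [mul_div_cancel₀ _ h]
  calc ∑ i, ∑ j, c i j * (x i - x j) ^ 2
      ≤ ∑ i, ∑ j, (K * (c i j * (x i ^ 2 / r i)) + K * (c i j * (x j ^ 2 / s j))) :=
        Finset.sum_le_sum fun i _ => Finset.sum_le_sum fun j _ => hterm i j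
    _ = K * (∑ i, ∑ j, c i j * (x i ^ 2 / r i) + ∑ i, ∑ j, c i j * (x j ^ 2 / s j)) := by
        simp only [Finset.sum_add_distrib, Finset.mul_sum, mul_add]
    _ ≤ K * (∑ i, x i ^ 2 + ∑ j, x j ^ 2) := by
        refine mul_le_mul_of_nonneg_left (add_le_add (Finset.sum_le_sum fun i _ => hrow i) ?_) hK0
        rw [Finset.sum_comm]
        exact Finset.sum_le_sum fun j _ => hcol j
    _ = 2 * K * ∑ i, x i ^ 2 := by ring

lemma Fin.sum_sum_succ_of_symm {k : ℕ} {f : Fin (k + 1) → Fin (k + 1) → ℝ}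
    (hf : ∀ a b, f a b = f b a) :
    ∑ α, ∑ β, f α β =
      f 0 0 + 2 * ∑ j : Fin k, f 0 j.succ + ∑ i : Fin k, ∑ j : Fin k, f i.succ j.succ := by
  simp only [Fin.sum_univ_succ, Finset.sum_add_distrib, hf _ 0]
  ring

namespace Matrix

variable {m ι : Type*} [Fintype m]

def frobInner : LinearMap.BilinForm ℝ (Matrix m m ℝ) :=
  LinearMap.mk₂ ℝ (fun A B => ∑ i, ∑ j, A i j * B i j)
    (fun A A' B => by simp only [add_apply, add_mul, Finset.sum_add_distrib])
    (fun c A B => by simp only [smul_apply, smul_eq_mul, Finset.mul_sum, mul_assoc])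
    (fun A B B' => by simp only [add_apply, mul_add, Finset.sum_add_distrib])
    (fun c A B => by simp only [smul_apply, smul_eq_mul, Finset.mul_sum, mul_left_comm])

@[simp]
lemma frobInner_apply (A B : Matrix m m ℝ) : frobInner A B = ∑ i, ∑ j, A i j * B i j := rfl

lemma frobInner_comm (A B : Matrix m m ℝ) : frobInner A B = frobInner B A := by
  simp only [frobInner_apply, mul_comm]

lemma frobInner_self_eq_sum_sq (A : Matrix m m ℝ) : frobInner A A = ∑ i, ∑ j, A i j ^ 2 := by
  simp only [frobInner_apply, sq]

lemma frobInner_self_nonneg (A : Matrix m m ℝ) : 0 ≤ frobInner A A := by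
  rw [frobInner_self_eq_sum_sq]; positivity

lemma frobInner_eq_trace (A B : Matrix m m ℝ) : frobInner A B = trace (Aᵀ * B) := by
  simp only [frobInner_apply, trace, diag_apply, mul_apply, transpose_apply]
  exact Finset.sum_comm

lemma frobInner_sq_le (A B : Matrix m m ℝ) :
    frobInner A B ^ 2 ≤ frobInner A A * frobInner B B := by
  simp only [frobInner_self_eq_sum_sq, frobInner_apply, ← Fintype.sum_prod_type']
  exact Finset.sum_mul_sq_le_sq_mul_sq _ _ _

lemma sum_frobInner_sq_le_of_pairwise {s : Finset ι} {C : ι → Matrix m m ℝ}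
    (horth : (s : Set ι).Pairwise fun β γ => frobInner (C β) (C γ) = 0) {M : ℝ} (hM0 : 0 ≤ M)
    (hM : ∀ β ∈ s, frobInner (C β) (C β) ≤ M) (X : Matrix m m ℝ) :
    ∑ β ∈ s, frobInner X (C β) ^ 2 ≤ M * frobInner X X := by
  set Q := ∑ β ∈ s, frobInner X (C β) ^ 2
  -- `⟪X, Y⟫ = Q` and `⟪Y, Y⟫ ≤ M Q`, so Cauchy–Schwarz gives `Q² ≤ ⟪X, X⟫ M Q`
  set Y := ∑ β ∈ s, frobInner X (C β) • C β
  have hXY : frobInner X Y = Q := by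
    simp only [Y, Q, map_sum, map_smul, smul_eq_mul, sq]
  have hYY : frobInner Y Y ≤ M * Q := by
    have hpyth : frobInner Y Y = ∑ β ∈ s, frobInner X (C β) ^ 2 * frobInner (C β) (C β) := by
      simp only [Y, map_sum, map_smul, LinearMap.sum_apply, LinearMap.smul_apply, smul_eq_mul]
      refine Finset.sum_congr rfl fun β hβ => ?_
      rw [Finset.sum_eq_single_of_mem β hβ fun γ hγ hγβ => by rw [horth hγ hβ hγβ]; ring]
      ring
    rw [hpyth, Finset.mul_sum]
    exact Finset.sum_le_sum fun β hβ => by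
      rw [mul_comm M]; exact mul_le_mul_of_nonneg_left (hM β hβ) (sq_nonneg _)
  have hCS : Q * Q ≤ Q * (M * frobInner X X) := by
    have := frobInner_sq_le X Y
    rw [hXY] at this
    nlinarith [frobInner_self_nonneg X]
  rcases (show 0 ≤ Q by positivity).eq_or_lt with hQ0 | hQpos
  · rw [← hQ0]; exact mul_nonneg hM0 (frobInner_self_nonneg X)
  · exact le_of_mul_le_mul_left hCS hQpos

lemma sum_frobInner_sum_smul [Fintype ι] [DecidableEq ι] {V : Matrix ι ι ℝ}
    (hV : V ∈ orthogonalGroup ι ℝ) (X Y : ι → Matrix m m ℝ) :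
    ∑ γ, frobInner (∑ α, V α γ • X α) (∑ β, V β γ • Y β) = ∑ α, frobInner (X α) (Y α) := by
  have hVV : V * Vᵀ = 1 := (mem_orthogonalGroup_iff _ _).1 hV
  have hentry : ∀ α β, ∑ γ, V α γ * V β γ = if α = β then 1 else 0 := fun α β => by
    simpa [mul_apply, one_apply] using congrFun (congrFun hVV α) β
  simp only [map_sum, map_smul, LinearMap.sum_apply, LinearMap.smul_apply, smul_eq_mul,
    Finset.mul_sum]
  rw [Finset.sum_comm]
  refine Finset.sum_congr rfl fun α _ => ?_
  rw [Finset.sum_comm]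
  simp_rw [← mul_assoc, ← Finset.sum_mul, hentry, ite_mul, one_mul, zero_mul,
    Finset.sum_ite_eq, Finset.mem_univ, if_true]

variable [DecidableEq m]

lemma frobInner_diagonal_left (d : m → ℝ) (B : Matrix m m ℝ) :
    frobInner (diagonal d) B = ∑ i, d i * B i i := by
  simp [diagonal_apply, ite_mul]

lemma frobInner_diagonal_self (d : m → ℝ) :
    frobInner (diagonal d) (diagonal d) = ∑ i, d i ^ 2 := by
  rw [frobInner_diagonal_left]; simp [sq]

lemma frobInner_single_one_left (i j : m) (B : Matrix m m ℝ) :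
    frobInner (single i j 1) B = B i j := by
  simp [single_apply, ite_and, ite_mul]

lemma lie_diagonal_apply (d : m → ℝ) (B : Matrix m m ℝ) (i j : m) :
    ⁅diagonal d, B⁆ i j = (d i - d j) * B i j := by
  simp only [Ring.lie_def, sub_apply, diagonal_mul, mul_diagonal]; ring

lemma frobInner_lie_diagonal_self (d : m → ℝ) (B : Matrix m m ℝ) :
    frobInner ⁅diagonal d, B⁆ ⁅diagonal d, B⁆ = ∑ i, ∑ j, (d i - d j) ^ 2 * B i j ^ 2 := by
  simp only [frobInner_apply, lie_diagonal_apply]; ring_nf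

lemma frobInner_conj {U : Matrix m m ℝ} (hU : U ∈ orthogonalGroup m ℝ) (A B : Matrix m m ℝ) :
    frobInner (Uᵀ * A * U) (Uᵀ * B * U) = frobInner A B := by
  have hUU : U * Uᵀ = 1 := (mem_orthogonalGroup_iff _ _).1 hU
  rw [frobInner_eq_trace, frobInner_eq_trace, transpose_mul, transpose_mul, transpose_transpose,
    show Uᵀ * (Aᵀ * U) * (Uᵀ * B * U) = Uᵀ * (Aᵀ * B) * U by
      simp only [Matrix.mul_assoc, ← Matrix.mul_assoc U Uᵀ, hUU, Matrix.one_mul],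
    trace_mul_cycle, hUU, Matrix.one_mul]

lemma lie_conj {U : Matrix m m ℝ} (hU : U ∈ orthogonalGroup m ℝ) (A B : Matrix m m ℝ) :
    ⁅Uᵀ * A * U, Uᵀ * B * U⁆ = Uᵀ * ⁅A, B⁆ * U := by
  have hUU : U * Uᵀ = 1 := (mem_orthogonalGroup_iff _ _).1 hU
  simp only [Ring.lie_def, Matrix.mul_sub, Matrix.sub_mul, Matrix.mul_assoc,
    ← Matrix.mul_assoc U Uᵀ, hUU, Matrix.one_mul]

lemma exists_orthogonal_diagonalize {A : Matrix m m ℝ} (hA : A.IsSymm) :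
    ∃ U ∈ orthogonalGroup m ℝ, ∃ d : m → ℝ, Uᵀ * A * U = diagonal d := by
  have hH : A.IsHermitian := by
    simpa [IsHermitian, conjTranspose_eq_transpose_of_trivial] using hA.eq
  refine ⟨hH.eigenvectorUnitary, hH.eigenvectorUnitary.2, hH.eigenvalues, ?_⟩
  simpa [Unitary.conjStarAlgAut_apply, star_eq_conjTranspose, conjTranspose_eq_transpose_of_trivial]
    using hH.conjStarAlgAut_star_eigenvectorUnitary

lemma two_mul_sum_offDiag_sq_le {C : Matrix m m ℝ} (hC : C.IsSymm) {i j : m} (hij : i ≠ j) :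
    2 * (∑ k, (if i = k then 0 else C i k ^ 2) + ∑ k, (if j = k then 0 else C j k ^ 2)) ≤
      frobInner C C + 2 * C i j ^ 2 := by
  have hoff : ∀ a, ∑ k, (if a = k then 0 else C a k ^ 2) = ∑ k, C a k ^ 2 - C a a ^ 2 := by
    intro a
    rw [Finset.sum_ite, Finset.sum_const_zero, zero_add, Finset.filter_not, Finset.filter_eq,
      if_pos (Finset.mem_univ a), Finset.sdiff_singleton_eq_erase,
      Finset.sum_erase_eq_sub (Finset.mem_univ a)]
  have hj : j ∈ Finset.univ.erase i := Finset.mem_erase.2 ⟨hij.symm, Finset.mem_univ j⟩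
  have hrest : ∀ f : m → ℝ, ∑ k ∈ (Finset.univ.erase i).erase j, f k = ∑ k, f k - f i - f j :=
    fun f => by rw [Finset.sum_erase_eq_sub hj, Finset.sum_erase_eq_sub (Finset.mem_univ i)]
  -- by symmetry, each row `k ∉ {i, j}` contains the entries of rows `i` and `j` in column `k`
  have hrows : ∑ k ∈ (Finset.univ.erase i).erase j, (C i k ^ 2 + C j k ^ 2) ≤
      ∑ k ∈ (Finset.univ.erase i).erase j, ∑ l, C k l ^ 2 := by
    refine Finset.sum_le_sum fun k _ => ?_
    rw [← hC.apply i k, ← hC.apply j k]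
    exact Finset.add_le_sum (fun l _ => sq_nonneg _) (Finset.mem_univ i) (Finset.mem_univ j) hij
  rw [hrest, hrest (fun k => ∑ l, C k l ^ 2), Finset.sum_add_distrib, hC.apply i j] at hrows
  rw [frobInner_self_eq_sum_sq, hoff, hoff]
  linarith [sq_nonneg (C i i), sq_nonneg (C j j)]

lemma sum_frobInner_lie_diagonal_le (d : m → ℝ) {s : Finset ι} {C : ι → Matrix m m ℝ}
    (hC : ∀ β ∈ s, (C β).IsSymm)
    (horth : (s : Set ι).Pairwise fun β γ => frobInner (C β) (C γ) = 0) {M : ℝ} (hM0 : 0 ≤ M)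
    (hM : ∀ β ∈ s, frobInner (C β) (C β) ≤ M) :
    ∑ β ∈ s, frobInner ⁅diagonal d, C β⁆ ⁅diagonal d, C β⁆ ≤
      (∑ i, d i ^ 2) * (∑ β ∈ s, frobInner (C β) (C β) + M) := by
  set W := ∑ β ∈ s, frobInner (C β) (C β)
  set c : m → m → ℝ := fun i j => ∑ β ∈ s, if i = j then 0 else C β i j ^ 2
  have hc : ∀ i j, 0 ≤ c i j := fun i j => Finset.sum_nonneg fun β _ => by split_ifs <;> positivity
  have hentry : ∀ i j, i ≠ j → 2 * ∑ β ∈ s, C β i j ^ 2 ≤ M := by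
    intro i j hij
    have hB := sum_frobInner_sq_le_of_pairwise horth hM0 hM (single i j 1 + single j i 1)
    simp only [map_add, LinearMap.add_apply, frobInner_single_one_left] at hB
    rw [Finset.sum_congr rfl fun β hβ => by rw [(hC β hβ).apply i j]] at hB
    simp only [single_apply_same, hij, hij.symm, and_self, not_false_eq_true, single_apply_of_ne,
      add_zero, zero_add] at hB
    have h4 : ∑ β ∈ s, (C β i j + C β i j) ^ 2 = 4 * ∑ β ∈ s, C β i j ^ 2 := by
      rw [Finset.mul_sum]; exact Finset.sum_congr rfl fun _ _ => by ring
    linarith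
  have hdeg : ∀ i j, i ≠ j → ∑ k, c i k + ∑ k, c k j ≤ (W + M) / 2 := by
    intro i j hij
    have hrow : ∑ k, c i k = ∑ β ∈ s, ∑ k, if i = k then 0 else C β i k ^ 2 := Finset.sum_comm
    have hcol : ∑ k, c k j = ∑ β ∈ s, ∑ k, if j = k then 0 else C β j k ^ 2 := by
      rw [Finset.sum_comm]
      refine Finset.sum_congr rfl fun β hβ => Finset.sum_congr rfl fun k _ => ?_
      simp only [eq_comm (a := k) (b := j), (hC β hβ).apply j k]
    have hsum := Finset.sum_le_sum fun β hβ => two_mul_sum_offDiag_sq_le (hC β hβ) hij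
    rw [← Finset.mul_sum, Finset.sum_add_distrib, Finset.sum_add_distrib, ← Finset.mul_sum] at hsum
    rw [hrow, hcol]
    linarith [hentry i j hij]
  have hWM : 0 ≤ (W + M) / 2 :=
    div_nonneg (add_nonneg (Finset.sum_nonneg fun β _ => frobInner_self_nonneg _) hM0) two_pos.le
  calc ∑ β ∈ s, frobInner ⁅diagonal d, C β⁆ ⁅diagonal d, C β⁆
      = ∑ i, ∑ j, c i j * (d i - d j) ^ 2 := by
        simp only [frobInner_lie_diagonal_self, c, Finset.sum_mul]
        rw [Finset.sum_comm]
        refine Finset.sum_congr rfl fun i _ => ?_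
        rw [Finset.sum_comm]
        refine Finset.sum_congr rfl fun j _ => Finset.sum_congr rfl fun β _ => ?_
        split_ifs with hij <;> simp [hij, mul_comm]
    _ ≤ 2 * ((W + M) / 2) * ∑ i, d i ^ 2 := sum_mul_sub_sq_le hc hWM hdeg d
    _ = _ := by ring

lemma sum_frobInner_lie_le {A : Matrix m m ℝ} (hA : A.IsSymm) {s : Finset ι}
    {C : ι → Matrix m m ℝ} (hC : ∀ β ∈ s, (C β).IsSymm)
    (horth : (s : Set ι).Pairwise fun β γ => frobInner (C β) (C γ) = 0) {M : ℝ} (hM0 : 0 ≤ M)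
    (hM : ∀ β ∈ s, frobInner (C β) (C β) ≤ M) :
    ∑ β ∈ s, frobInner ⁅A, C β⁆ ⁅A, C β⁆ ≤
      frobInner A A * (∑ β ∈ s, frobInner (C β) (C β) + M) := by
  obtain ⟨U, hU, d, hd⟩ := exists_orthogonal_diagonalize hA
  have hconj : ∀ X Y, frobInner (Uᵀ * X * U) (Uᵀ * Y * U) = frobInner X Y := frobInner_conj hU
  have key := sum_frobInner_lie_diagonal_le d (s := s) (C := fun β => Uᵀ * C β * U)
    (fun β hβ => by simp [IsSymm, Matrix.mul_assoc, (hC β hβ).eq])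
    (fun β hβ γ hγ hβγ => by simp only [hconj, horth hβ hγ hβγ]) hM0
    (fun β hβ => by simp only [hconj, hM β hβ])
  simp only [← hd, lie_conj hU, hconj] at key
  rwa [← frobInner_diagonal_self, ← hd, hconj] at key

lemma li_li_inequality_of_pairwise [Fintype ι] {B : ι → Matrix m m ℝ} (hB : ∀ γ, (B γ).IsSymm)
    (horth : Pairwise fun γ δ => frobInner (B γ) (B δ) = 0) :
    ∑ γ, ∑ δ, frobInner (B γ) (B δ) ^ 2 + ∑ γ, ∑ δ, frobInner ⁅B γ, B δ⁆ ⁅B γ, B δ⁆ ≤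
      3 / 2 * (∑ γ, frobInner (B γ) (B γ)) ^ 2 := by
  classical
  rcases isEmpty_or_nonempty ι with hι | hι
  · simp
  set S := fun γ => frobInner (B γ) (B γ)
  set σ := ∑ γ, S γ
  have hS : ∀ γ, 0 ≤ S γ := fun γ => frobInner_self_nonneg _
  obtain ⟨γ₀, -, hγ₀⟩ := Finset.exists_max_image Finset.univ S Finset.univ_nonempty
  have hrest : ∀ γ, ∑ δ ∈ Finset.univ.erase γ, S δ = σ - S γ :=
    fun γ => Finset.sum_erase_eq_sub (Finset.mem_univ γ)
  -- `cap γ` bounds the `S δ` with `δ ≠ γ`; this choice makes `∑ γ, S γ * cap γ ≤ σ² / 2`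
  set cap := fun γ => if γ = γ₀ then σ - S γ₀ else S γ₀
  have hcap : ∀ γ, ∀ δ ∈ Finset.univ.erase γ, S δ ≤ cap γ := by
    intro γ δ hδ
    simp only [cap]
    split_ifs with h
    · subst h
      rw [← hrest]
      exact Finset.single_le_sum (fun δ _ => hS δ) hδ
    · exact hγ₀ δ (Finset.mem_univ δ)
  have hcap0 : ∀ γ, 0 ≤ cap γ := fun γ => by
    simp only [cap]
    split_ifs
    · rw [← hrest]; exact Finset.sum_nonneg fun δ _ => hS δ
    · exact hS γ₀
  have hrow : ∀ γ, ∑ δ, frobInner (B γ) (B δ) ^ 2 + ∑ δ, frobInner ⁅B γ, B δ⁆ ⁅B γ, B δ⁆ ≤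
      S γ * σ + S γ * cap γ := by
    intro γ
    have hinner : ∑ δ, frobInner (B γ) (B δ) ^ 2 = S γ ^ 2 :=
      Fintype.sum_eq_single γ fun δ hδ => by simp [horth hδ.symm]
    have hlie : ∑ δ, frobInner ⁅B γ, B δ⁆ ⁅B γ, B δ⁆ =
        ∑ δ ∈ Finset.univ.erase γ, frobInner ⁅B γ, B δ⁆ ⁅B γ, B δ⁆ := by
      rw [Finset.sum_erase_eq_sub (Finset.mem_univ γ), lie_self, map_zero, sub_zero]
    have hlu := sum_frobInner_lie_le (hB γ) (s := Finset.univ.erase γ) (fun δ _ => hB δ)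
      (fun δ _ δ' _ h => horth h) (hcap0 γ) (hcap γ)
    rw [hrest] at hlu
    rw [hinner, hlie]
    nlinarith [hlu]
  have hcapsum : ∑ γ, S γ * cap γ = 2 * S γ₀ * (σ - S γ₀) := by
    rw [← Finset.add_sum_erase _ _ (Finset.mem_univ γ₀),
      Finset.sum_congr rfl fun γ hγ => show S γ * cap γ = S γ * S γ₀ by
        simp [cap, Finset.ne_of_mem_erase hγ],
      ← Finset.sum_mul, hrest]
    simp only [cap, if_pos rfl]
    ring
  calc _ = ∑ γ, (∑ δ, frobInner (B γ) (B δ) ^ 2 + ∑ δ, frobInner ⁅B γ, B δ⁆ ⁅B γ, B δ⁆) :=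
        Finset.sum_add_distrib.symm
    _ ≤ ∑ γ, (S γ * σ + S γ * cap γ) := Finset.sum_le_sum fun γ _ => hrow γ
    _ = σ ^ 2 + 2 * S γ₀ * (σ - S γ₀) := by
        rw [Finset.sum_add_distrib, ← Finset.sum_mul, hcapsum]; ring
    _ ≤ 3 / 2 * σ ^ 2 := by nlinarith [sq_nonneg (σ - 2 * S γ₀)]

theorem li_li_inequality [Fintype ι] {B : ι → Matrix m m ℝ} (hB : ∀ γ, (B γ).IsSymm) :
    ∑ γ, ∑ δ, frobInner (B γ) (B δ) ^ 2 + ∑ γ, ∑ δ, frobInner ⁅B γ, B δ⁆ ⁅B γ, B δ⁆ ≤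
      3 / 2 * (∑ γ, frobInner (B γ) (B γ)) ^ 2 := by
  classical
  set G : Matrix ι ι ℝ := of fun γ δ => frobInner (B γ) (B δ)
  obtain ⟨V, hV, μ, hVG⟩ :=
    exists_orthogonal_diagonalize (A := G) (IsSymm.ext fun γ δ => frobInner_comm _ _)
  set B' := fun γ => ∑ α, V α γ • B α
  have hB'G : ∀ γ δ, frobInner (B' γ) (B' δ) = (Vᵀ * G * V) γ δ := by
    intro γ δ
    simp only [B', G, map_sum, map_smul, LinearMap.sum_apply, LinearMap.smul_apply, smul_eq_mul,
      mul_apply, transpose_apply, of_apply, Finset.mul_sum, Finset.sum_mul]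
    exact Finset.sum_congr rfl fun _ _ => Finset.sum_congr rfl fun _ _ => by ring
  have hB'symm : ∀ γ, (B' γ).IsSymm := fun γ => by
    simp [B', IsSymm, transpose_sum, (hB _).eq]
  have horth : Pairwise fun γ δ => frobInner (B' γ) (B' δ) = 0 := fun γ δ h => by
    simp only [hB'G, hVG, diagonal_apply_ne _ h]
  have hnorm : ∑ γ, frobInner (B' γ) (B' γ) = ∑ γ, frobInner (B γ) (B γ) :=
    sum_frobInner_sum_smul hV B B
  have hinner : ∑ γ, ∑ δ, frobInner (B' γ) (B' δ) ^ 2 = ∑ γ, ∑ δ, frobInner (B γ) (B δ) ^ 2 := by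
    simpa only [hB'G, frobInner_self_eq_sum_sq, G, of_apply] using frobInner_conj hV G G
  have hlie_left : ∀ Z : Matrix m m ℝ,
      ∑ γ, frobInner ⁅B' γ, Z⁆ ⁅B' γ, Z⁆ = ∑ α, frobInner ⁅B α, Z⁆ ⁅B α, Z⁆ := fun Z => by
    have h : ∀ γ, ⁅B' γ, Z⁆ = ∑ α, V α γ • ⁅B α, Z⁆ := fun γ => by
      simp only [B', sum_lie, smul_lie]
    simp only [h]
    exact sum_frobInner_sum_smul hV _ _
  have hlie_right : ∀ Z : Matrix m m ℝ,
      ∑ δ, frobInner ⁅Z, B' δ⁆ ⁅Z, B' δ⁆ = ∑ β, frobInner ⁅Z, B β⁆ ⁅Z, B β⁆ := fun Z => by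
    have h : ∀ δ, ⁅Z, B' δ⁆ = ∑ β, V β δ • ⁅Z, B β⁆ := fun δ => by
      simp only [B', lie_sum, lie_smul]
    simp only [h]
    exact sum_frobInner_sum_smul hV _ _
  have hlie : ∑ γ, ∑ δ, frobInner ⁅B' γ, B' δ⁆ ⁅B' γ, B' δ⁆ =
      ∑ γ, ∑ δ, frobInner ⁅B γ, B δ⁆ ⁅B γ, B δ⁆ := by
    rw [Finset.sum_comm]
    simp_rw [hlie_left]
    rw [Finset.sum_comm]
    simp_rw [hlie_right]
  simpa only [hnorm, hinner, hlie] using li_li_inequality_of_pairwise hB'symm horth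

lemma frobInner_sq_add_lie_diagonal_le (d : m → ℝ) (B : Matrix m m ℝ) :
    frobInner (diagonal d) B ^ 2 + frobInner ⁅diagonal d, B⁆ ⁅diagonal d, B⁆ ≤
      2 * (∑ i, d i ^ 2) * frobInner B B := by
  set N := ∑ i, d i ^ 2
  have hN : 0 ≤ N := by positivity
  have hinner : frobInner (diagonal d) B ^ 2 ≤ N * ∑ i, B i i ^ 2 := by
    rw [frobInner_diagonal_left]
    exact Finset.sum_mul_sq_le_sq_mul_sq _ _ _
  have hentry : ∀ i j, (d i - d j) ^ 2 * B i j ^ 2 + (if i = j then N * B i j ^ 2 else 0) ≤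
      2 * N * B i j ^ 2 := by
    intro i j
    split_ifs with h
    · subst h
      nlinarith [sq_nonneg (B i i)]
    · have hij : d i ^ 2 + d j ^ 2 ≤ N :=
        Finset.add_le_sum (fun k _ => sq_nonneg (d k)) (Finset.mem_univ i) (Finset.mem_univ j) h
      nlinarith [sq_nonneg (B i j), sq_nonneg (d i + d j)]
  have hsum := Finset.sum_le_sum fun i (_ : i ∈ Finset.univ) =>
    Finset.sum_le_sum fun j (_ : j ∈ Finset.univ) => hentry i j
  simp only [Finset.sum_add_distrib, Finset.sum_ite_eq, Finset.mem_univ, if_true,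
    ← Finset.mul_sum] at hsum
  rw [frobInner_lie_diagonal_self, frobInner_self_eq_sum_sq]
  linarith

lemma frobInner_sq_add_lie_le_of_isDiag {D B : Matrix m m ℝ} (hD : D.IsDiag) (hB : B.trace = 0) :
    frobInner D B ^ 2 + frobInner ⁅D, B⁆ ⁅D, B⁆ ≤
      2 * (frobInner D D - D.trace ^ 2 / Fintype.card m) * frobInner B B := by
  set c := D.trace / Fintype.card m
  set d := fun i => D i i - c
  have hD' : D = diagonal (diag D) := hD.diagonal_diag.symm
  have hinner : frobInner D B = frobInner (diagonal d) B := by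
    rw [hD', frobInner_diagonal_left, frobInner_diagonal_left]
    simp only [d, diag_apply, sub_mul, Finset.sum_sub_distrib, ← Finset.mul_sum]
    rw [show ∑ i, B i i = B.trace from rfl, hB, mul_zero, sub_zero]
  have hlie : ⁅D, B⁆ = ⁅diagonal d, B⁆ := by
    ext i j
    rw [hD', lie_diagonal_apply, lie_diagonal_apply]
    simp only [d, diag_apply, sub_sub_sub_cancel_right]
  have hnorm : ∑ i, d i ^ 2 = frobInner D D - D.trace ^ 2 / Fintype.card m := by
    rw [hD', frobInner_diagonal_self]
    simp only [d, c, diag_apply, diagonal_apply_eq, trace, sub_sq, Finset.sum_add_distrib,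
      Finset.sum_sub_distrib, ← Finset.sum_mul, ← Finset.mul_sum, Finset.sum_const,
      Finset.card_univ, nsmul_eq_mul]
    rcases eq_or_ne (Fintype.card m : ℝ) 0 with h | h
    · simp [h]
    · field_simp
      ring
  rw [hinner, hlie, ← hnorm]
  exact frobInner_sq_add_lie_diagonal_le d B

end Matrix

open Matrix

theorem stmt_3_general (p n : ℕ) [NeZero p]
    (A : Fin p → Matrix (Fin n) (Fin n) ℝ)
    (hA : ∀ α, (A α)ᵀ = A α)
    (hdiag : (A 0).IsDiag)
    (htr : ∀ α, α ≠ 0 → Matrix.trace (A α) = 0)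
    (H h2 hring2 P R1 ξinv : ℝ)
    (hH : H = Matrix.trace (A 0))
    (hh2 : h2 = ∑ α, ∑ i, ∑ j, (A α i j) ^ 2)
    (hhring2 : hring2 = h2 - H ^ 2 / (n : ℝ))
    (hP : P = ∑ α ∈ Finset.univ.filter (· ≠ (0 : Fin p)), ∑ i, ∑ j, (A α i j) ^ 2)
    (hR1 : R1 = (∑ α, ∑ β, (∑ i, ∑ j, A α i j * A β i j) ^ 2)
        + ∑ α, ∑ β, ∑ i, ∑ j, ((A α * A β - A β * A α) i j) ^ 2)
    (hξ : ξinv = if p = 2 then (2 : ℝ) else 3 / 2) :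
    R1 ≤ h2 ^ 2 + (2 * hring2 - (2 / (n : ℝ)) * H ^ 2) * P - ξinv * P ^ 2 := by
  obtain ⟨k, rfl⟩ : ∃ k, p = k + 1 := ⟨p - 1, (Nat.succ_pred_eq_of_ne_zero (NeZero.ne p)).symm⟩
  set q := fun α β => frobInner (A α) (A β) ^ 2 + frobInner ⁅A α, A β⁆ ⁅A α, A β⁆
  have hq : ∀ α β, q α β = q β α := fun α β => by
    simp only [q, frobInner_comm (A α), ← lie_skew (A α), map_neg, LinearMap.neg_apply, neg_neg]
  have hR : R1 = ∑ α, ∑ β, q α β := by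
    simp only [q, frobInner_self_eq_sum_sq, Ring.lie_def]
    simp only [hR1, frobInner_apply, Finset.sum_add_distrib]
  have hPs : P = ∑ i : Fin k, frobInner (A i.succ) (A i.succ) := by
    rw [hP, Finset.filter_ne', Finset.sum_erase_eq_sub (Finset.mem_univ _), Fin.sum_univ_succ,
      add_sub_cancel_left]
    simp only [frobInner_self_eq_sum_sq]
  have hh : h2 = frobInner (A 0) (A 0) + P := by
    rw [hh2, hPs, Fin.sum_univ_succ]
    simp only [frobInner_self_eq_sum_sq]
  have hq00 : q 0 0 = frobInner (A 0) (A 0) ^ 2 := by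
    simp only [q, lie_self, map_zero, add_zero]
  have hcross : ∑ j : Fin k, q 0 j.succ ≤ 2 * (frobInner (A 0) (A 0) - H ^ 2 / n) * P := by
    rw [hPs, Finset.mul_sum]
    refine Finset.sum_le_sum fun j _ => ?_
    simpa only [Fintype.card_fin, hH] using
      frobInner_sq_add_lie_le_of_isDiag hdiag (htr j.succ (Fin.succ_ne_zero j))
  have hblock : ∑ i : Fin k, ∑ j : Fin k, q i.succ j.succ ≤ (3 - ξinv) * P ^ 2 := by
    rw [hξ, hPs]
    split_ifs with hp2
    · obtain rfl : k = 1 := by omega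
      simp only [q, Fin.sum_univ_one, lie_self, map_zero, add_zero]
      norm_num
    · have := li_li_inequality (B := fun i : Fin k => A i.succ) (fun i => hA i.succ)
      simp only [q, Finset.sum_add_distrib]
      linarith
  rw [hR, Fin.sum_sum_succ_of_symm hq, hq00, hhring2, hh]
  linear_combination 2 * hcross + hblock

/-- The estimate `R₁ ≤ |h|⁴ + (2|h̊|² − (2/n)H²) P − ξ⁻¹ P²` from Section 2. -/
theorem stmt_3 (p n : ℕ) [NeZero p] (hp : 2 ≤ p) (hn : 1 ≤ n)
    (A : Fin p → Matrix (Fin n) (Fin n) ℝ)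
    (hA : ∀ α, (A α)ᵀ = A α)
    (hdiag : (A 0).IsDiag)
    (htr : ∀ α, α ≠ 0 → Matrix.trace (A α) = 0)
    (H h2 hring2 P R1 ξinv : ℝ)
    (hH : H = Matrix.trace (A 0))
    (hh2 : h2 = ∑ α, ∑ i, ∑ j, (A α i j) ^ 2)
    (hhring2 : hring2 = h2 - H ^ 2 / (n : ℝ))
    (hP : P = ∑ α ∈ Finset.univ.filter (· ≠ (0 : Fin p)), ∑ i, ∑ j, (A α i j) ^ 2)
    (hR1 : R1 = (∑ α, ∑ β, (∑ i, ∑ j, A α i j * A β i j) ^ 2)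
        + ∑ α, ∑ β, ∑ i, ∑ j, ((A α * A β - A β * A α) i j) ^ 2)
    (hξ : ξinv = if p = 2 then (2 : ℝ) else 3 / 2) :
    R1 ≤ h2 ^ 2 + (2 * hring2 - (2 / (n : ℝ)) * H ^ 2) * P - ξinv * P ^ 2 :=
  stmt_3_general p n A hA hdiag htr H h2 hring2 P R1 ξinv hH hh2 hhring2 hP hR1 hξ
end

section
/- Let n ≥ 1 and p ≥ 1 be integers, and let T(i,j,k,α) (1 ≤ i,j,k ≤ n, 1 ≤ α ≤ p) be a family of real numbers that is invariant under all permutations of the indices i, j, k. Then Σ_{i,j,k,α} T(i,j,k,α)² ≥ (3/(n+2)) Σ_{k,α} (Σ_i T(i,i,k,α))². -/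
/-!
Put `H k = ∑ i, T i i k` and `A = traceLift H`, i.e. `A i j k = δᵢⱼ H k + δᵢₖ H j + δⱼₖ H i`.
Total symmetry of `T` gives `⟨T, A⟩ = 3 |H|²`, and since `A` is itself totally symmetric with trace
`(n + 2) H`, also `|A|² = 3 (n + 2) |H|²`. Expanding `0 ≤ |T - A / (n + 2)|²` is the inequality,
slice by slice in `α`.
-/

open scoped BigOperators

open Finset

section

variable {ι : Type*} [DecidableEq ι]

def traceLift (H : ι → ℝ) (i j k : ι) : ℝ :=
  (if i = j then H k else 0) + (if i = k then H j else 0) + (if j = k then H i else 0)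

theorem traceLift_swap₁₂ (H : ι → ℝ) (i j k : ι) : traceLift H i j k = traceLift H j i k := by
  simp only [traceLift, eq_comm (a := i)]
  ring

theorem traceLift_swap₂₃ (H : ι → ℝ) (i j k : ι) : traceLift H i j k = traceLift H i k j := by
  simp only [traceLift, eq_comm (a := j)]
  ring

variable [Fintype ι]

theorem sum_mul_traceLift {T : ι → ι → ι → ℝ} (h₁ : ∀ i j k, T i j k = T j i k)
    (h₂ : ∀ i j k, T i j k = T i k j) (H : ι → ℝ) :
    ∑ i, ∑ j, ∑ k, T i j k * traceLift H i j k = 3 * ∑ k, (∑ i, T i i k) * H k := by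
  have e₁ : ∑ i, ∑ j, ∑ k, T i j k * (if i = j then H k else 0) = ∑ i, ∑ k, T i i k * H k :=
    sum_congr rfl fun i _ => by
      rw [sum_comm]
      simp only [mul_ite, mul_zero, sum_ite_eq, mem_univ, if_true]
  have e₂ : ∑ i, ∑ j, ∑ k, T i j k * (if i = k then H j else 0) = ∑ i, ∑ k, T i i k * H k := by
    simp only [mul_ite, mul_zero, sum_ite_eq, mem_univ, if_true]
    exact sum_congr rfl fun i _ => sum_congr rfl fun j _ => by rw [h₂]
  have e₃ : ∑ i, ∑ j, ∑ k, T i j k * (if j = k then H i else 0) = ∑ i, ∑ k, T i i k * H k := by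
    rw [sum_comm]
    simp only [mul_ite, mul_zero, sum_ite_eq, mem_univ, if_true]
    exact sum_congr rfl fun j _ => sum_congr rfl fun i _ => by rw [h₁, h₂]
  have hdiag : ∑ i, ∑ k, T i i k * H k = ∑ k, (∑ i, T i i k) * H k := by
    rw [sum_comm]
    simp only [sum_mul]
  simp only [traceLift, mul_add, sum_add_distrib, e₁, e₂, e₃, hdiag]
  ring

theorem sum_traceLift_diag (H : ι → ℝ) (k : ι) :
    ∑ i, traceLift H i i k = (Fintype.card ι + 2) * H k := by
  simp [traceLift, sum_add_distrib]
  ring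

theorem sum_traceLift_sq (H : ι → ℝ) :
    ∑ i, ∑ j, ∑ k, traceLift H i j k ^ 2 = 3 * (Fintype.card ι + 2) * ∑ k, H k ^ 2 := by
  simp only [sq, sum_mul_traceLift (traceLift_swap₁₂ H) (traceLift_swap₂₃ H), sum_traceLift_diag,
    mul_sum]
  exact sum_congr rfl fun k _ => by ring

theorem sum_trace_sq_le_sum_sq {T : ι → ι → ι → ℝ} (h₁ : ∀ i j k, T i j k = T j i k)
    (h₂ : ∀ i j k, T i j k = T i k j) :
    3 / ((Fintype.card ι : ℝ) + 2) * ∑ k, (∑ i, T i i k) ^ 2 ≤ ∑ i, ∑ j, ∑ k, T i j k ^ 2 := by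
  set H : ι → ℝ := fun k => ∑ i, T i i k
  set c : ℝ := ((Fintype.card ι : ℝ) + 2)⁻¹
  have hc : c * ((Fintype.card ι : ℝ) + 2) = 1 := inv_mul_cancel₀ (by positivity)
  have expand : ∑ i, ∑ j, ∑ k, (T i j k - c * traceLift H i j k) ^ 2
      = ∑ i, ∑ j, ∑ k, T i j k ^ 2 - 2 * c * ∑ i, ∑ j, ∑ k, T i j k * traceLift H i j k
        + c ^ 2 * ∑ i, ∑ j, ∑ k, traceLift H i j k ^ 2 := by
    have pointwise : ∀ i j k, (T i j k - c * traceLift H i j k) ^ 2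
        = T i j k ^ 2 - 2 * c * (T i j k * traceLift H i j k) + c ^ 2 * traceLift H i j k ^ 2 :=
      fun i j k => by ring
    simp only [pointwise, sum_add_distrib, sum_sub_distrib, mul_sum]
  have hsq : 0 ≤ ∑ i, ∑ j, ∑ k, (T i j k - c * traceLift H i j k) ^ 2 := by positivity
  rw [expand, sum_mul_traceLift h₁ h₂, sum_traceLift_sq] at hsq
  have htrace : ∑ k, (∑ i, T i i k) * H k = ∑ k, H k ^ 2 := sum_congr rfl fun k _ => (sq _).symm
  rw [htrace] at hsq
  rw [div_eq_mul_inv]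
  linear_combination hsq + 3 * c * (∑ k, H k ^ 2) * hc

end

theorem stmt_4_general (n p : ℕ)
    (T : Fin n → Fin n → Fin n → Fin p → ℝ)
    (hsym1 : ∀ i j k α, T i j k α = T j i k α)
    (hsym2 : ∀ i j k α, T i j k α = T i k j α) :
    (3 / ((n : ℝ) + 2)) * ∑ k, ∑ α, (∑ i, T i i k α) ^ 2
      ≤ ∑ i, ∑ j, ∑ k, ∑ α, (T i j k α) ^ 2 := by
  have slice (α : Fin p) := sum_trace_sq_le_sum_sq (T := fun i j k => T i j k α)
    (fun i j k => hsym1 i j k α) (fun i j k => hsym2 i j k α)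
  simp only [Fintype.card_fin] at slice
  calc 3 / ((n : ℝ) + 2) * ∑ k, ∑ α, (∑ i, T i i k α) ^ 2
      = ∑ α, 3 / ((n : ℝ) + 2) * ∑ k, (∑ i, T i i k α) ^ 2 := by rw [sum_comm, mul_sum]
    _ ≤ ∑ α, ∑ i, ∑ j, ∑ k, T i j k α ^ 2 := sum_le_sum fun α _ => slice α
    _ = ∑ i, ∑ j, ∑ k, ∑ α, T i j k α ^ 2 := by
      rw [sum_comm]
      refine sum_congr rfl fun i _ => ?_
      rw [sum_comm]
      exact sum_congr rfl fun j _ => sum_comm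

/-- Huisken's estimate (pointwise algebraic form): for a family `T(i,j,k,α)` totally
symmetric in `i,j,k`, `Σ T² ≥ (3/(n+2)) Σ_{k,α} (Σ_i T(i,i,k,α))²`. -/
theorem stmt_4 (n p : ℕ) (hn : 1 ≤ n) (hp : 1 ≤ p)
    (T : Fin n → Fin n → Fin n → Fin p → ℝ)
    (hsym1 : ∀ i j k α, T i j k α = T j i k α)
    (hsym2 : ∀ i j k α, T i j k α = T i k j α) :
    (3 / ((n : ℝ) + 2)) * ∑ k, ∑ α, (∑ i, T i i k α) ^ 2
      ≤ ∑ i, ∑ j, ∑ k, ∑ α, (T i j k α) ^ 2 :=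
  stmt_4_general n p T hsym1 hsym2
end

section
/- Let n ≥ 1 and p ≥ 1 be integers, and let T(i,j,k,α) (1 ≤ i,j,k ≤ n, 1 ≤ α ≤ p) be a family of real numbers that is invariant under all permutations of the indices i, j, k. Then Σ_{i,j,k,α} T(i,j,k,α)² − (1/n) Σ_{k,α} (Σ_i T(i,i,k,α))² ≥ (2(n−1)/(n(n+2))) Σ_{k,α} (Σ_i T(i,i,k,α))². -/
/-!
Fix `α` and write `u = tr T`. Let `S` be the symmetrisation of `δ ⊗ u`,
`S i j k = δᵢⱼ uₖ + δⱼₖ uᵢ + δᵢₖ uⱼ`. For totally symmetric `T` one has `⟨T, S⟩ = 3|u|²`, and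
`|S|² = 3(n+2)|u|²`, so `0 ≤ |T - S/(n+2)|² = |T|² - 3|u|²/(n+2)`. Summing over `α`, the theorem
is this bound rewritten with `3/(n+2) = 1/n + 2(n-1)/(n(n+2))`.
-/

open Finset

namespace SymmetricTensor

variable {ι : Type*} [Fintype ι]

lemma sum_sub_mul_sq (f g : ι → ι → ι → ℝ) (c : ℝ) :
    ∑ i, ∑ j, ∑ k, (f i j k - c * g i j k) ^ 2 =
      ∑ i, ∑ j, ∑ k, f i j k ^ 2 - 2 * c * ∑ i, ∑ j, ∑ k, f i j k * g i j k
        + c ^ 2 * ∑ i, ∑ j, ∑ k, g i j k ^ 2 := by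
  have (i j k : ι) : (f i j k - c * g i j k) ^ 2 =
      f i j k ^ 2 - 2 * c * (f i j k * g i j k) + c ^ 2 * g i j k ^ 2 := by ring
  simp only [this, sum_add_distrib, sum_sub_distrib, mul_sum]

def trace (t : ι → ι → ι → ℝ) (k : ι) : ℝ := ∑ i, t i i k

variable [DecidableEq ι]

def symmDelta (u : ι → ℝ) (i j k : ι) : ℝ :=
  (if i = j then u k else 0) + (if j = k then u i else 0) + (if i = k then u j else 0)

lemma sum_mul_symmDelta (t : ι → ι → ι → ℝ) (h₁₂ : ∀ i j k, t i j k = t j i k)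
    (h₂₃ : ∀ i j k, t i j k = t i k j) (u : ι → ℝ) :
    ∑ i, ∑ j, ∑ k, t i j k * symmDelta u i j k = 3 * ∑ k, trace t k * u k := by
  have e₁ : ∑ i, ∑ j, ∑ k, t i j k * (if i = j then u k else 0) = ∑ k, trace t k * u k := by
    simp only [mul_ite, mul_zero, sum_ite_irrel, sum_const_zero, sum_ite_eq, mem_univ, if_true,
      trace, sum_mul]
    exact sum_comm
  have e₂ : ∑ i, ∑ j, ∑ k, t i j k * (if j = k then u i else 0) = ∑ k, trace t k * u k := by
    simp only [mul_ite, mul_zero, sum_ite_eq, mem_univ, if_true, trace, sum_mul]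
    exact sum_congr rfl fun i _ => sum_congr rfl fun j _ => by rw [h₁₂, h₂₃]
  have e₃ : ∑ i, ∑ j, ∑ k, t i j k * (if i = k then u j else 0) = ∑ k, trace t k * u k := by
    simp only [mul_ite, mul_zero, sum_ite_eq, mem_univ, if_true, trace, sum_mul]
    rw [sum_comm]
    exact sum_congr rfl fun j _ => sum_congr rfl fun i _ => by rw [h₂₃]
  simp only [symmDelta, mul_add, sum_add_distrib, e₁, e₂, e₃]
  ring

lemma sum_symmDelta_sq (u : ι → ℝ) :
    ∑ i, ∑ j, ∑ k, symmDelta u i j k ^ 2 = 3 * (Fintype.card ι + 2) * ∑ k, u k ^ 2 := by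
  simp only [symmDelta, add_sq, ite_pow, mul_ite, ite_mul, mul_add, add_mul, mul_zero, zero_mul,
    ne_eq, OfNat.ofNat_ne_zero, not_false_eq_true, zero_pow, sum_add_distrib, sum_ite_irrel,
    sum_const_zero, sum_ite_eq, sum_ite_eq', mem_univ, if_true, sum_const, card_univ, nsmul_eq_mul,
    mul_sum]
  simp only [← sum_add_distrib]
  exact sum_congr rfl fun _ _ => by ring

theorem three_div_mul_sum_trace_sq_le (t : ι → ι → ι → ℝ) (h₁₂ : ∀ i j k, t i j k = t j i k)
    (h₂₃ : ∀ i j k, t i j k = t i k j) :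
    3 / (Fintype.card ι + 2) * ∑ k, trace t k ^ 2 ≤ ∑ i, ∑ j, ∑ k, t i j k ^ 2 := by
  set c : ℝ := 1 / (Fintype.card ι + 2) with hc
  calc 3 / (Fintype.card ι + 2) * ∑ k, trace t k ^ 2
      = ∑ i, ∑ j, ∑ k, t i j k ^ 2
          - ∑ i, ∑ j, ∑ k, (t i j k - c * symmDelta (trace t) i j k) ^ 2 := by
        rw [sum_sub_mul_sq, sum_mul_symmDelta t h₁₂ h₂₃, sum_symmDelta_sq, hc]
        field_simp
        ring
    _ ≤ ∑ i, ∑ j, ∑ k, t i j k ^ 2 := sub_le_self _ (by positivity)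

end SymmetricTensor

open SymmetricTensor in
theorem stmt_5_general (n p : ℕ) (hn : 1 ≤ n)
    (T : Fin n → Fin n → Fin n → Fin p → ℝ)
    (hsym1 : ∀ i j k α, T i j k α = T j i k α)
    (hsym2 : ∀ i j k α, T i j k α = T i k j α) :
    (2 * ((n : ℝ) - 1) / ((n : ℝ) * ((n : ℝ) + 2))) * ∑ k, ∑ α, (∑ i, T i i k α) ^ 2
      ≤ (∑ i, ∑ j, ∑ k, ∑ α, (T i j k α) ^ 2)
          - (1 / (n : ℝ)) * ∑ k, ∑ α, (∑ i, T i i k α) ^ 2 := by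
  have hcoef : 2 * ((n : ℝ) - 1) / ((n : ℝ) * ((n : ℝ) + 2)) =
      3 / ((n : ℝ) + 2) - 1 / (n : ℝ) := by
    have : (n : ℝ) ≠ 0 := Nat.cast_ne_zero.mpr (by omega)
    field_simp
    ring
  have hslices := sum_le_sum fun α (_ : α ∈ univ) =>
    three_div_mul_sum_trace_sq_le (fun i j k => T i j k α) (fun i j k => hsym1 i j k α)
      (fun i j k => hsym2 i j k α)
  simp only [trace, Fintype.card_fin, ← mul_sum] at hslices
  have hswap : ∑ α, ∑ i, ∑ j, ∑ k, T i j k α ^ 2 = ∑ i, ∑ j, ∑ k, ∑ α, T i j k α ^ 2 := by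
    rw [sum_comm]
    refine sum_congr rfl fun i _ => ?_
    rw [sum_comm]
    exact sum_congr rfl fun j _ => sum_comm
  rw [sum_comm, hswap] at hslices
  rw [hcoef]
  linarith

/-- `|∇h̊|² = |∇h|² − (1/n)|∇H|² ≥ (2(n−1)/(n(n+2)))|∇H|²` in pointwise algebraic form. -/
theorem stmt_5 (n p : ℕ) (hn : 1 ≤ n) (hp : 1 ≤ p)
    (T : Fin n → Fin n → Fin n → Fin p → ℝ)
    (hsym1 : ∀ i j k α, T i j k α = T j i k α)
    (hsym2 : ∀ i j k α, T i j k α = T i k j α) :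
    (2 * ((n : ℝ) - 1) / ((n : ℝ) * ((n : ℝ) + 2))) * ∑ k, ∑ α, (∑ i, T i i k α) ^ 2
      ≤ (∑ i, ∑ j, ∑ k, ∑ α, (T i j k α) ^ 2)
          - (1 / (n : ℝ)) * ∑ k, ∑ α, (∑ i, T i i k α) ^ 2 :=
  stmt_5_general n p hn T hsym1 hsym2
end

section
/- Let n ≥ 3 and p ≥ 1 be integers, and let T(i,j,k,α) (1 ≤ i,j,k ≤ n, 1 ≤ α ≤ p) be a family of real numbers that is invariant under all permutations of the indices i, j, k. Then Σ_{i,j,k,α} T(i,j,k,α)² − (1/n + 1/n²) Σ_{k,α} (Σ_i T(i,i,k,α))² ≥ (1/(3n)) Σ_{k,α} (Σ_i T(i,i,k,α))². -/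
/-!
Pair `T` by Cauchy–Schwarz with the totally symmetric tensor `S = symmDelta (tr T)`, whose entries
are `δᵢⱼ (tr T)ₖ + δⱼₖ (tr T)ᵢ + δₖᵢ (tr T)ⱼ`. Symmetry of `T` gives `⟨T, S⟩ = 3 |tr T|²`, and since
`S` is itself symmetric with `tr S = (n + 2) tr T`, also `|S|² = 3 (n + 2) |tr T|²`. Hence
`|T|² ≥ 3 |tr T|² / (n + 2)`, and `3 / (n + 2) ≥ 1/(3n) + 1/n + 1/n²` for `n ≥ 3`.
-/

open Finset

variable {ι κ R : Type*}

structure IsTotallySymm (T : ι → ι → ι → κ → R) : Prop where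
  swap₁₂ : ∀ i j k α, T i j k α = T j i k α
  swap₂₃ : ∀ i j k α, T i j k α = T i k j α

section CommSemiring

variable [CommSemiring R]

def symmDelta [DecidableEq ι] (v : ι → κ → R) (i j k : ι) (α : κ) : R :=
  (if i = j then v k α else 0) + (if j = k then v i α else 0) + (if k = i then v j α else 0)

theorem isTotallySymm_symmDelta [DecidableEq ι] (v : ι → κ → R) :
    IsTotallySymm (symmDelta v) where
  swap₁₂ i j k α := by simp only [symmDelta, eq_comm]; ring
  swap₂₃ i j k α := by simp only [symmDelta, eq_comm]; ring

variable [Fintype ι]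

def tensorTrace (T : ι → ι → ι → κ → R) (k : ι) (α : κ) : R := ∑ i, T i i k α

namespace IsTotallySymm

variable {T : ι → ι → ι → κ → R}

theorem sum_diag₂₃ (hT : IsTotallySymm T) (i : ι) (α : κ) :
    ∑ j, T i j j α = tensorTrace T i α :=
  sum_congr rfl fun j _ => by rw [hT.swap₁₂, hT.swap₂₃]

theorem sum_diag₁₃ (hT : IsTotallySymm T) (j : ι) (α : κ) :
    ∑ i, T i j i α = tensorTrace T j α :=
  sum_congr rfl fun i _ => by rw [hT.swap₂₃, hT.swap₁₂]

theorem sum_mul_symmDelta [DecidableEq ι] [Fintype κ] (hT : IsTotallySymm T)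
    (w : ι → κ → R) :
    ∑ i, ∑ j, ∑ k, ∑ α, T i j k α * symmDelta w i j k α
      = 3 * ∑ k, ∑ α, tensorTrace T k α * w k α := by
  simp only [symmDelta, mul_add, mul_ite, mul_zero, sum_add_distrib, sum_ite_irrel,
    sum_const_zero, sum_ite_eq, sum_ite_eq', mem_univ, if_true]
  have h₁ : ∑ i, ∑ k, ∑ α, T i i k α * w k α = ∑ k, ∑ α, tensorTrace T k α * w k α := by
    simp only [tensorTrace, sum_mul]
    rw [sum_comm]
    exact sum_congr rfl fun k _ => sum_comm
  have h₂ : ∑ i, ∑ j, ∑ α, T i j j α * w i α = ∑ k, ∑ α, tensorTrace T k α * w k α := by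
    simp only [← hT.sum_diag₂₃, sum_mul]
    exact sum_congr rfl fun i _ => sum_comm
  have h₃ : ∑ i, ∑ j, ∑ α, T i j i α * w j α = ∑ k, ∑ α, tensorTrace T k α * w k α := by
    simp only [← hT.sum_diag₁₃, sum_mul]
    rw [sum_comm]
    exact sum_congr rfl fun j _ => sum_comm
  rw [h₁, h₂, h₃]
  ring

end IsTotallySymm

variable [DecidableEq ι]

theorem tensorTrace_symmDelta (v : ι → κ → R) (k : ι) (α : κ) :
    tensorTrace (symmDelta v) k α = (Fintype.card ι + 2) * v k α := by
  simp only [tensorTrace, symmDelta, sum_add_distrib, if_true, sum_const, card_univ,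
    nsmul_eq_mul, sum_ite_eq, sum_ite_eq', mem_univ]
  ring

theorem sum_sq_symmDelta [Fintype κ] (v : ι → κ → R) :
    ∑ i, ∑ j, ∑ k, ∑ α, symmDelta v i j k α ^ 2
      = 3 * (Fintype.card ι + 2) * ∑ k, ∑ α, v k α ^ 2 := by
  simp only [sq, (isTotallySymm_symmDelta v).sum_mul_symmDelta, tensorTrace_symmDelta,
    mul_assoc, ← mul_sum]

end CommSemiring

section Order

variable [Field R] [LinearOrder R] [IsStrictOrderedRing R]

theorem sum4_mul_sq_le_sq_mul_sq {ι₁ ι₂ ι₃ ι₄ : Type*} [Fintype ι₁] [Fintype ι₂] [Fintype ι₃]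
    [Fintype ι₄] (f g : ι₁ → ι₂ → ι₃ → ι₄ → R) :
    (∑ i, ∑ j, ∑ k, ∑ l, f i j k l * g i j k l) ^ 2
      ≤ (∑ i, ∑ j, ∑ k, ∑ l, f i j k l ^ 2) * ∑ i, ∑ j, ∑ k, ∑ l, g i j k l ^ 2 := by
  simp only [← Fintype.sum_prod_type']
  exact sum_mul_sq_le_sq_mul_sq _ _ _

theorem IsTotallySymm.three_mul_sum_sq_tensorTrace_le [Fintype ι] [Fintype κ]
    {T : ι → ι → ι → κ → R} (hT : IsTotallySymm T) :
    3 * ∑ k, ∑ α, tensorTrace T k α ^ 2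
      ≤ (Fintype.card ι + 2) * ∑ i, ∑ j, ∑ k, ∑ α, T i j k α ^ 2 := by
  classical
  set B := ∑ k, ∑ α, tensorTrace T k α ^ 2
  have hcs := sum4_mul_sq_le_sq_mul_sq T (symmDelta (tensorTrace T))
  rw [hT.sum_mul_symmDelta, sum_sq_symmDelta] at hcs
  simp only [← sq] at hcs
  rcases (show 0 ≤ B by positivity).eq_or_lt with hB | hB
  · rw [← hB, mul_zero]
    positivity
  · exact le_of_mul_le_mul_right (by linear_combination hcs) (by positivity : 0 < 3 * B)

end Order

theorem one_div_three_mul_add_one_div_add_one_div_sq_le {x : ℝ} (hx : 3 ≤ x) :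
    1 / (3 * x) + (1 / x + 1 / x ^ 2) ≤ 3 / (x + 2) := by
  have hx₀ : 0 < x := by linarith
  rw [show 1 / (3 * x) + (1 / x + 1 / x ^ 2) = (4 * x + 3) / (3 * x ^ 2) by field_simp; ring,
    div_le_div_iff₀ (by positivity) (by positivity)]
  nlinarith [mul_nonneg (sub_nonneg.2 hx) hx₀.le]

theorem stmt_6_general (n p : ℕ) (hn : 3 ≤ n)
    (T : Fin n → Fin n → Fin n → Fin p → ℝ)
    (hsym1 : ∀ i j k α, T i j k α = T j i k α)
    (hsym2 : ∀ i j k α, T i j k α = T i k j α) :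
    (1 / (3 * (n : ℝ))) * ∑ k, ∑ α, (∑ i, T i i k α) ^ 2
      ≤ (∑ i, ∑ j, ∑ k, ∑ α, (T i j k α) ^ 2)
          - (1 / (n : ℝ) + 1 / (n : ℝ) ^ 2) * ∑ k, ∑ α, (∑ i, T i i k α) ^ 2 := by
  set B := ∑ k, ∑ α, (∑ i, T i i k α) ^ 2
  set A := ∑ i, ∑ j, ∑ k, ∑ α, T i j k α ^ 2
  have key : 3 * B ≤ (n + 2) * A := by
    have h := (IsTotallySymm.mk hsym1 hsym2).three_mul_sum_sq_tensorTrace_le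
    rwa [Fintype.card_fin] at h
  have hn' : (3 : ℝ) ≤ n := by exact_mod_cast hn
  have : (1 / (3 * (n : ℝ)) + (1 / n + 1 / n ^ 2)) * B ≤ A :=
    calc _ ≤ 3 / (n + 2) * B := by
          gcongr
          exact one_div_three_mul_add_one_div_add_one_div_sq_le hn'
      _ ≤ A := by rw [div_mul_eq_mul_div, div_le_iff₀ (by positivity)]; linarith
  linarith

/-- `|∇h̊|² − (1/n²)|∇H|² ≥ (1/(3n))|∇H|²` in pointwise algebraic form, for `n ≥ 3`. -/
theorem stmt_6 (n p : ℕ) (hn : 3 ≤ n) (hp : 1 ≤ p)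
    (T : Fin n → Fin n → Fin n → Fin p → ℝ)
    (hsym1 : ∀ i j k α, T i j k α = T j i k α)
    (hsym2 : ∀ i j k α, T i j k α = T i k j α) :
    (1 / (3 * (n : ℝ))) * ∑ k, ∑ α, (∑ i, T i i k α) ^ 2
      ≤ (∑ i, ∑ j, ∑ k, ∑ α, (T i j k α) ^ 2)
          - (1 / (n : ℝ) + 1 / (n : ℝ) ^ 2) * ∑ k, ∑ α, (∑ i, T i i k α) ^ 2 :=
  stmt_6_general n p hn T hsym1 hsym2
end

section
/- Let b and ξ be positive real numbers with 1/2 ≤ ξ < b⁻¹ − 1. Define G(x,y) = (2b((4/3)x + b) + x(y−1))/(x + 2b) − (xy + ξ⁻¹ y²)/((1/3)x + b) + 2y − 1 for x, y ≥ 0. Then there exists δ > 0 such that G(x,y) ≤ −δ for all x, y ∈ [0, ∞); in particular sup_{x,y ∈ [0,∞)} G(x,y) < 0. -/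
/-!
Completing the square in `y` writes `G(x, y)` as a cubic `P(x)` over `12 (x + 2b)² (x + 3b)` minus
a square over `12 ξ (x + 2b)² (x + 3b)`. With `ε = 1 - b - ξ b > 0`, the cubic
`P(x) + 12 ε (x + 2b)² (x + 3b)` has nonpositive coefficients once `ξ ≥ 1/2` (which forces
`b < 2/3`), so `G ≤ -ε` on the quadrant.
-/

noncomputable def gFun (b ξ x y : ℝ) : ℝ :=
  (2 * b * ((4 / 3) * x + b) + x * (y - 1)) / (x + 2 * b)
    - (x * y + ξ⁻¹ * y ^ 2) / ((1 / 3) * x + b) + 2 * y - 1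

def gNumerator (b ξ x : ℝ) : ℝ :=
  (32 * b - 24) * x ^ 3 + (184 * b - 144 + 49 * ξ * b) * b * x ^ 2
    + 24 * (13 * b - 11 + 7 * ξ * b) * b ^ 2 * x - 144 * (1 - b - ξ * b) * b ^ 3

theorem gFun_eq_sub_sq {b ξ x : ℝ} (hξ : ξ ≠ 0) (hb : 0 < b) (hx : 0 ≤ x) (y : ℝ) :
    gFun b ξ x y = gNumerator b ξ x / (12 * (x + 2 * b) ^ 2 * (x + 3 * b))
      - (6 * (x + 2 * b) * y - ξ * b * (7 * x + 12 * b)) ^ 2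
        / (12 * ξ * (x + 2 * b) ^ 2 * (x + 3 * b)) := by
  unfold gFun gNumerator
  field_simp
  ring

theorem cubic_nonpos {a₃ a₂ a₁ x : ℝ} (h₃ : a₃ ≤ 0) (h₂ : a₂ ≤ 0) (h₁ : a₁ ≤ 0) (hx : 0 ≤ x) :
    a₃ * x ^ 3 + a₂ * x ^ 2 + a₁ * x ≤ 0 := by
  have := mul_nonpos_of_nonpos_of_nonneg h₃ (pow_nonneg hx 3)
  have := mul_nonpos_of_nonpos_of_nonneg h₂ (pow_nonneg hx 2)
  have := mul_nonpos_of_nonpos_of_nonneg h₁ hx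
  linarith

theorem gNumerator_le {b ξ x : ℝ} (hb : 0 ≤ b) (hξ : 1 / 2 ≤ ξ) (hε : 0 ≤ 1 - b - ξ * b)
    (hx : 0 ≤ x) :
    gNumerator b ξ x ≤ -(1 - b - ξ * b) * (12 * (x + 2 * b) ^ 2 * (x + 3 * b)) := by
  have hξb : b / 2 ≤ ξ * b := by nlinarith
  have hdiff := cubic_nonpos (a₃ := 20 * b - 12 - 12 * ξ * b)
    (a₂ := b * (100 * b - 60 - 35 * ξ * b)) (a₁ := 24 * b ^ 2 * (5 * b - 3 - ξ * b))
    (by linarith) (mul_nonpos_of_nonneg_of_nonpos hb (by linarith))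
    (mul_nonpos_of_nonneg_of_nonpos (by positivity) (by linarith)) hx
  unfold gNumerator
  linarith

/-- Lemma: if `1/2 ≤ ξ < b⁻¹ − 1` then `G` has a negative upper bound on `[0,∞)²`. -/
theorem stmt_7 (b ξ : ℝ) (hb : 0 < b) (hξ0 : 0 < ξ)
    (hξ1 : 1 / 2 ≤ ξ) (hξ2 : ξ < b⁻¹ - 1)
    (G : ℝ → ℝ → ℝ)
    (hG : ∀ x y : ℝ, G x y =
      (2 * b * ((4 / 3) * x + b) + x * (y - 1)) / (x + 2 * b)
        - (x * y + ξ⁻¹ * y ^ 2) / ((1 / 3) * x + b) + 2 * y - 1) :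
    ∃ δ > (0 : ℝ), ∀ x y : ℝ, 0 ≤ x → 0 ≤ y → G x y ≤ -δ := by
  have hε : 0 < 1 - b - ξ * b := by
    have : (ξ + 1) * b < 1 := by rw [← lt_div_iff₀ hb, one_div]; linarith
    linarith
  refine ⟨1 - b - ξ * b, hε, fun x y hx _ => ?_⟩
  have hD : 0 < 12 * (x + 2 * b) ^ 2 * (x + 3 * b) := by positivity
  calc G x y ≤ gNumerator b ξ x / (12 * (x + 2 * b) ^ 2 * (x + 3 * b)) := by
        rw [hG, ← gFun, gFun_eq_sub_sq hξ0.ne' hb hx]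
        exact sub_le_self _ (by positivity)
    _ ≤ -(1 - b - ξ * b) := by
        rw [div_le_iff₀ hD]
        exact gNumerator_le hb.le hξ1 hε.le hx
end

section
/- Let n and ε be positive real numbers and define φ : (n², ∞) → ℝ by φ(x) = x(1 − n²/x)^{2+ε}. Then for every x > n², φ'(x) + 2x·φ''(x) < 4. -/
/-!
With `t = n²/x` and `p = 2 + ε`, a direct computation gives
`φ'(x) + 2x φ''(x) = (1-t)^ε ((1-t)² + p t (1-t) + 2p(p-1) t²)`.
The quadratic factor equals `4 (1 + εt + ε(1+ε)t²/2) - 3(1-t)(1+t+εt)`, and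
`(1-t)^ε (1 + εt + ε(1+ε)t²/2) ≤ 1` since this function of `t` equals `1` at `t = 0` and has
derivative `-ε(1+ε)(2+ε)/2 · t² (1-t)^(ε-1) ≤ 0`.
-/

open Real Set Filter Topology

lemma hasDerivAt_one_sub_div_rpow {c x : ℝ} (p : ℝ) (hx : 0 < x) (hcx : c < x) :
    HasDerivAt (fun z ↦ (1 - c / z) ^ p) (p * (c / x ^ 2) * (1 - c / x) ^ (p - 1)) x := by
  have hu : 0 < 1 - c / x := sub_pos.mpr ((div_lt_one hx).mpr hcx)
  have hdiv : HasDerivAt (fun z ↦ 1 - c / z) (c / x ^ 2) x := by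
    simpa [div_eq_mul_inv] using ((hasDerivAt_inv hx.ne').const_mul c).const_sub 1
  exact (hdiv.rpow_const (Or.inl hu.ne')).congr_deriv (by ring)

lemma hasDerivAt_mul_one_sub_div_rpow {c x : ℝ} (p : ℝ) (hx : 0 < x) (hcx : c < x) :
    HasDerivAt (fun z ↦ z * (1 - c / z) ^ p)
      ((1 - c / x) ^ p + p * (c / x) * (1 - c / x) ^ (p - 1)) x := by
  refine ((hasDerivAt_id' x).mul (hasDerivAt_one_sub_div_rpow p hx hcx)).congr_deriv ?_
  field_simp

lemma hasDerivAt_one_sub_div_rpow_add {c x : ℝ} (p : ℝ) (hx : 0 < x) (hcx : c < x) :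
    HasDerivAt (fun z ↦ (1 - c / z) ^ p + p * (c / z) * (1 - c / z) ^ (p - 1))
      (p * (p - 1) * (c ^ 2 / x ^ 3) * (1 - c / x) ^ (p - 2)) x := by
  have hdiv : HasDerivAt (fun z ↦ c / z) (-(c / x ^ 2)) x := by
    simpa [div_eq_mul_inv] using (hasDerivAt_inv hx.ne').const_mul c
  refine ((hasDerivAt_one_sub_div_rpow p hx hcx).add ((hdiv.const_mul p).mul
    (hasDerivAt_one_sub_div_rpow (p - 1) hx hcx))).congr_deriv ?_
  rw [show p - 1 - 1 = p - 2 by ring]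
  field_simp
  ring

lemma one_sub_rpow_mul_taylor_le_one {ε v : ℝ} (hε : 0 ≤ ε) (hv0 : 0 ≤ v) (hv1 : v < 1) :
    (1 - v) ^ ε * (1 + ε * v + ε * (1 + ε) * v ^ 2 / 2) ≤ 1 := by
  let G : ℝ → ℝ := fun t ↦ (1 - t) ^ ε * (1 + ε * t + ε * (1 + ε) * t ^ 2 / 2)
  let G' : ℝ → ℝ := fun t ↦ -(ε * (1 + ε) * (2 + ε) / 2) * t ^ 2 * (1 - t) ^ (ε - 1)
  have hG : ∀ t < 1, HasDerivAt G (G' t) t := by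
    intro t ht
    have hu : 0 < 1 - t := sub_pos.mpr ht
    have hpow : HasDerivAt (fun t : ℝ ↦ (1 - t) ^ ε) (-1 * ε * (1 - t) ^ (ε - 1)) t :=
      ((hasDerivAt_id t).const_sub 1).rpow_const (Or.inl hu.ne')
    have hpoly : HasDerivAt (fun t : ℝ ↦ 1 + ε * t + ε * (1 + ε) * t ^ 2 / 2)
        (ε + ε * (1 + ε) * t) t := by
      refine ((((hasDerivAt_id' t).const_mul ε).const_add 1).add
        (((hasDerivAt_pow 2 t).const_mul (ε * (1 + ε))).div_const 2)).congr_deriv ?_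
      ring
    refine (hpow.mul hpoly).congr_deriv ?_
    have hsplit : (1 - t) ^ ε = (1 - t) ^ (ε - 1) * (1 - t) := by
      rw [← rpow_add_one hu.ne']
      ring_nf
    rw [hsplit]
    ring
  have hanti : AntitoneOn G (Ico 0 1) := by
    refine antitoneOn_of_hasDerivWithinAt_nonpos (f' := G') (convex_Ico 0 1)
      (fun t ht ↦ (hG t ht.2).continuousAt.continuousWithinAt) (fun t ht ↦ ?_) (fun t ht ↦ ?_)
    · rw [interior_Ico] at ht
      exact (hG t ht.2).hasDerivWithinAt
    · rw [interior_Ico] at ht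
      have : 0 ≤ ε * (1 + ε) * (2 + ε) / 2 * t ^ 2 * (1 - t) ^ (ε - 1) := by
        have := rpow_pos_of_pos (sub_pos.mpr ht.2) (ε - 1)
        positivity
      simp only [G']
      linarith
  simpa [G] using hanti ⟨le_rfl, zero_lt_one⟩ ⟨hv0, hv1⟩ hv0

lemma one_sub_rpow_mul_quadratic_lt_four {ε t : ℝ} (hε : 0 ≤ ε) (ht0 : 0 ≤ t) (ht1 : t < 1) :
    (1 - t) ^ ε * ((1 - t) ^ 2 + (2 + ε) * t * (1 - t) + 2 * (2 + ε) * (1 + ε) * t ^ 2) < 4 := by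
  have hu : 0 < (1 - t) ^ ε := rpow_pos_of_pos (sub_pos.mpr ht1) ε
  have hgap : 0 < 3 * (1 - t) * (1 + t + ε * t) := by
    have := sub_pos.mpr ht1
    positivity
  calc (1 - t) ^ ε * ((1 - t) ^ 2 + (2 + ε) * t * (1 - t) + 2 * (2 + ε) * (1 + ε) * t ^ 2)
      = 4 * ((1 - t) ^ ε * (1 + ε * t + ε * (1 + ε) * t ^ 2 / 2))
          - (1 - t) ^ ε * (3 * (1 - t) * (1 + t + ε * t)) := by ring
    _ < 4 * 1 := by
      have := one_sub_rpow_mul_taylor_le_one hε ht0 ht1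
      nlinarith [mul_pos hu hgap]
    _ = 4 := by ring

theorem stmt_11_general (n ε : ℝ) (hε : 0 < ε)
    (φ : ℝ → ℝ)
    (hφ : ∀ x : ℝ, n ^ 2 < x → φ x = x * (1 - n ^ 2 / x) ^ (2 + ε)) :
    ∀ x : ℝ, n ^ 2 < x →
      deriv φ x + 2 * x * deriv (deriv φ) x < 4 := by
  intro x hx
  have hpos : ∀ {y}, n ^ 2 < y → 0 < y := fun hy ↦ (sq_nonneg n).trans_lt hy
  have hφ' : deriv φ =ᶠ[𝓝 x] fun y ↦
      (1 - n ^ 2 / y) ^ (2 + ε) + (2 + ε) * (n ^ 2 / y) * (1 - n ^ 2 / y) ^ (2 + ε - 1) := by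
    filter_upwards [Ioi_mem_nhds hx] with y hy
    have hφy : φ =ᶠ[𝓝 y] fun z ↦ z * (1 - n ^ 2 / z) ^ (2 + ε) :=
      eventually_of_mem (Ioi_mem_nhds hy) hφ
    rw [hφy.deriv_eq, (hasDerivAt_mul_one_sub_div_rpow _ (hpos hy) hy).deriv]
  rw [hφ'.eq_of_nhds, hφ'.deriv_eq, (hasDerivAt_one_sub_div_rpow_add _ (hpos hx) hx).deriv]
  have ht1 : n ^ 2 / x < 1 := (div_lt_one (hpos hx)).mpr hx
  have hu : 1 - n ^ 2 / x ≠ 0 := (sub_pos.mpr ht1).ne'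
  convert one_sub_rpow_mul_quadratic_lt_four hε.le (div_nonneg (sq_nonneg n) (hpos hx).le) ht1 using 1
  rw [show 2 + ε = ε + 1 + 1 by ring, show ε + 1 + 1 - 1 = ε + 1 by ring,
    show ε + 1 + 1 - 2 = ε by ring, rpow_add_one hu, rpow_add_one hu]
  field_simp
  ring

/-- For `φ(x) = x (1 − n²/x)^{2+ε}` on `(n², ∞)`: `φ'(x) + 2x φ''(x) < 4`. -/
theorem stmt_11 (n ε : ℝ) (hn : 0 < n) (hε : 0 < ε)
    (φ : ℝ → ℝ)
    (hφ : ∀ x : ℝ, n ^ 2 < x → φ x = x * (1 - n ^ 2 / x) ^ (2 + ε)) :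
    ∀ x : ℝ, n ^ 2 < x →
      deriv φ x + 2 * x * deriv (deriv φ) x < 4 :=
  stmt_11_general n ε hε φ hφ
end

section
/- Let ε > 0 be a real number. Then for every real y with 0 < y < 1, ((1+ε)(3+2ε)y² + εy + 1)·(1−y)^ε < 4. -/
/-!
From the logarithmic series, `log (1 - y) ≤ -(y + y²/2)`, so `(1 - y)^ε ≤ exp (-s)` with
`s = ε (y + y²/2)`, and `exp (-s) ≤ 1 / (1 + s + s²/2)`. It remains to check the polynomial
inequality `P(y) < 4 (1 + s + s²/2)`: using `s² ≥ ε² y²`, the difference is at least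
`3 (1 - y²) + 3 ε y (1 - y) > 0`.
-/

open Real

theorem Real.log_one_sub_le_neg_sub_sq_div_two {y : ℝ} (h₀ : 0 ≤ y) (h₁ : y < 1) :
    log (1 - y) ≤ -y - y ^ 2 / 2 := by
  have hsum := hasSum_pow_div_log_of_abs_lt_one (by rwa [abs_of_nonneg h₀] : |y| < 1)
  have := sum_le_hasSum (Finset.range 2) (fun n _ => by positivity) hsum
  norm_num [Finset.sum_range_succ] at this
  linarith

theorem Real.one_sub_rpow_le_exp {y ε : ℝ} (h₀ : 0 ≤ y) (h₁ : y < 1) (hε : 0 ≤ ε) :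
    (1 - y) ^ ε ≤ exp (-(ε * (y + y ^ 2 / 2))) := by
  rw [rpow_def_of_pos (by linarith)]
  gcongr
  nlinarith [log_one_sub_le_neg_sub_sq_div_two h₀ h₁]

theorem Real.exp_neg_le_inv_quadratic {s : ℝ} (hs : 0 ≤ s) :
    exp (-s) ≤ (1 + s + s ^ 2 / 2)⁻¹ := by
  rw [exp_neg]
  exact inv_anti₀ (by positivity) (quadratic_le_exp_of_nonneg hs)

/-- For `ε > 0` and `0 < y < 1`: `((1+ε)(3+2ε)y² + εy + 1)(1−y)^ε < 4`. -/
theorem stmt_12 (ε : ℝ) (hε : 0 < ε) :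
    ∀ y : ℝ, 0 < y → y < 1 →
      ((1 + ε) * (3 + 2 * ε) * y ^ 2 + ε * y + 1) * (1 - y) ^ ε < 4 := by
  intro y hy₀ hy₁
  set s := ε * (y + y ^ 2 / 2) with hs
  have hs_sq : ε ^ 2 * y ^ 2 ≤ s ^ 2 := by
    rw [hs, mul_pow]
    gcongr
    nlinarith
  have hpoly : (1 + ε) * (3 + 2 * ε) * y ^ 2 + ε * y + 1 < 4 * (1 + s + s ^ 2 / 2) := by
    nlinarith [mul_pos (mul_pos hε hy₀) (sub_pos.2 hy₁)]
  calc ((1 + ε) * (3 + 2 * ε) * y ^ 2 + ε * y + 1) * (1 - y) ^ ε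
      ≤ ((1 + ε) * (3 + 2 * ε) * y ^ 2 + ε * y + 1) * (1 + s + s ^ 2 / 2)⁻¹ := by
        gcongr
        exact (one_sub_rpow_le_exp hy₀.le hy₁ hε.le).trans
          (exp_neg_le_inv_quadratic (by positivity))
    _ < 4 := by
        rw [← div_eq_mul_inv, div_lt_iff₀ (by positivity)]
        exact hpoly
end

section
/- Let ε > 0 be a real number and define ψ(y) = ((1+ε)(3+2ε)y² + εy + 1)·(1−y)^ε for 0 < y < 1. Then for every y ∈ (0,1), ψ(y) ≤ (2(7ε+6)/(2ε+3))·(2ε/(2ε+3))^ε, with equality when y = 3/(3+2ε); that is, sup_{0<y<1} ψ(y) = ψ(3/(3+2ε)) = (2(7ε+6)/(2ε+3))·(2ε/(2ε+3))^ε. -/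
/-!
On `(-∞, 1)` the derivative of `ψ` factors as
`(1 - y)^(ε - 1) (1 + ε)(2 + ε) y (3 - (3 + 2ε) y)`, so on `[0, 1)` the function increases up to
`y₀ = 3 / (3 + 2ε)` and decreases after it; evaluating at `y₀` gives the constant.
-/

open Set

noncomputable section

namespace Stmt13

def psi (ε y : ℝ) : ℝ := ((1 + ε) * (3 + 2 * ε) * y ^ 2 + ε * y + 1) * (1 - y) ^ ε

def critPt (ε : ℝ) : ℝ := 3 / (3 + 2 * ε)

theorem hasDerivAt_psi (ε : ℝ) {y : ℝ} (hy : y < 1) :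
    HasDerivAt (psi ε)
      ((1 - y) ^ (ε - 1) * ((1 + ε) * (2 + ε) * y * (3 - (3 + 2 * ε) * y))) y := by
  have hpos : 0 < 1 - y := by linarith
  have hpoly : HasDerivAt (fun y : ℝ => (1 + ε) * (3 + 2 * ε) * y ^ 2 + ε * y + 1)
      ((1 + ε) * (3 + 2 * ε) * (2 * y) + ε) y := by
    refine ((((hasDerivAt_pow 2 y).const_mul ((1 + ε) * (3 + 2 * ε))).add
      ((hasDerivAt_id y).const_mul ε)).add_const 1).congr_deriv ?_
    ring
  have hrpow : HasDerivAt (fun y : ℝ => (1 - y) ^ ε) (ε * (1 - y) ^ (ε - 1) * (-1)) y :=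
    (Real.hasDerivAt_rpow_const (Or.inl hpos.ne')).comp y ((hasDerivAt_id y).const_sub 1)
  have hsplit : (1 - y) ^ ε = (1 - y) ^ (ε - 1) * (1 - y) := by
    rw [← Real.rpow_add_one hpos.ne', sub_add_cancel]
  refine (hpoly.mul hrpow).congr_deriv ?_
  rw [hsplit]
  ring

theorem continuousOn_psi (ε : ℝ) : ContinuousOn (psi ε) (Iio 1) :=
  fun _ hy => (hasDerivAt_psi ε hy).continuousAt.continuousWithinAt

variable {ε : ℝ}

theorem critPt_pos (hε : 0 < ε) : 0 < critPt ε := by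
  unfold critPt; positivity

theorem critPt_lt_one (hε : 0 < ε) : critPt ε < 1 := by
  rw [critPt, div_lt_one (by linarith)]
  linarith

/-- The sign of `3 - (3 + 2ε) y` is that of `critPt ε - y`. -/
theorem three_sub_mul_eq (hε : 0 < ε) (y : ℝ) :
    3 - (3 + 2 * ε) * y = (3 + 2 * ε) * (critPt ε - y) := by
  rw [critPt]
  field_simp

theorem strictMonoOn_psi (hε : 0 < ε) : StrictMonoOn (psi ε) (Icc 0 (critPt ε)) := by
  refine strictMonoOn_of_deriv_pos (convex_Icc _ _)
    ((continuousOn_psi ε).mono fun y hy => hy.2.trans_lt (critPt_lt_one hε)) fun y hy => ?_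
  rw [interior_Icc] at hy
  rw [(hasDerivAt_psi ε (hy.2.trans (critPt_lt_one hε))).deriv, three_sub_mul_eq hε]
  have hy1 : 0 < 1 - y := by linarith [hy.2, critPt_lt_one hε]
  have hε' : 0 < 3 + 2 * ε := by positivity
  exact mul_pos (by positivity)
    (mul_pos (mul_pos (by positivity) hy.1) (mul_pos hε' (sub_pos.2 hy.2)))

theorem strictAntiOn_psi (hε : 0 < ε) : StrictAntiOn (psi ε) (Ico (critPt ε) 1) := by
  refine strictAntiOn_of_deriv_neg (convex_Ico _ _)
    ((continuousOn_psi ε).mono fun y hy => hy.2) fun y hy => ?_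
  rw [interior_Ico] at hy
  rw [(hasDerivAt_psi ε hy.2).deriv, three_sub_mul_eq hε]
  have hy0 : 0 < y := (critPt_pos hε).trans hy.1
  have hy1 : 0 < 1 - y := by linarith [hy.2]
  refine mul_neg_of_pos_of_neg (by positivity) (mul_neg_of_pos_of_neg (by positivity) ?_)
  exact mul_neg_of_pos_of_neg (by linarith) (sub_neg.2 hy.1)

theorem psi_le_psi_critPt (hε : 0 < ε) {y : ℝ} (hy0 : 0 ≤ y) (hy1 : y < 1) :
    psi ε y ≤ psi ε (critPt ε) := by
  rcases le_total y (critPt ε) with hle | hle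
  · exact (strictMonoOn_psi hε).monotoneOn ⟨hy0, hle⟩ ⟨(critPt_pos hε).le, le_rfl⟩ hle
  · exact (strictAntiOn_psi hε).antitoneOn ⟨le_rfl, critPt_lt_one hε⟩ ⟨hle, hy1⟩ hle

theorem psi_critPt (hε : 0 < ε) :
    psi ε (critPt ε) = 2 * (7 * ε + 6) / (2 * ε + 3) * (2 * ε / (2 * ε + 3)) ^ ε := by
  have h3 : 3 + 2 * ε ≠ 0 := by positivity
  have hpoly : (1 + ε) * (3 + 2 * ε) * critPt ε ^ 2 + ε * critPt ε + 1
      = 2 * (7 * ε + 6) / (2 * ε + 3) := by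
    rw [critPt]; field_simp; ring
  have hbase : 1 - critPt ε = 2 * ε / (2 * ε + 3) := by
    rw [critPt]; field_simp; ring
  rw [psi, hpoly, hbase]

end Stmt13

end

open Stmt13 in
/-- `sup_{0<y<1} ψ(y) = ψ(3/(3+2ε)) = (2(7ε+6)/(2ε+3)) (2ε/(2ε+3))^ε` for
`ψ(y) = ((1+ε)(3+2ε)y² + εy + 1)(1−y)^ε`. -/
theorem stmt_13 (ε : ℝ) (hε : 0 < ε)
    (ψ : ℝ → ℝ)
    (hψ : ∀ y : ℝ, 0 < y → y < 1 →
      ψ y = ((1 + ε) * (3 + 2 * ε) * y ^ 2 + ε * y + 1) * (1 - y) ^ ε) :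
    (∀ y : ℝ, 0 < y → y < 1 →
        ψ y ≤ 2 * (7 * ε + 6) / (2 * ε + 3) * (2 * ε / (2 * ε + 3)) ^ ε) ∧
      ψ (3 / (3 + 2 * ε))
        = 2 * (7 * ε + 6) / (2 * ε + 3) * (2 * ε / (2 * ε + 3)) ^ ε := by
  have hψ' : ∀ y, 0 < y → y < 1 → ψ y = psi ε y := hψ
  refine ⟨fun y hy0 hy1 => ?_, ?_⟩
  · rw [hψ' y hy0 hy1, ← psi_critPt hε]
    exact psi_le_psi_critPt hε hy0.le hy1
  · exact (hψ' _ (critPt_pos hε) (critPt_lt_one hε)).trans (psi_critPt hε)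
end

section
/- For every real number ε > 0, log(2(7ε+6)/(2ε+3)) + ε·log(2ε/(2ε+3)) < log 4; equivalently, (2(7ε+6)/(2ε+3))·(2ε/(2ε+3))^ε < 4. -/
/-!
Put `x = 2ε/(2ε+3) ∈ (0,1)`. Then `2(7ε+6)/(2ε+3) = 4 + 3x` and `ε(1 - x) = 3x/2`, so by
`log y ≤ y - 1` the first logarithm is at most `log 4 + 3x/4`, while
`ε log x < ε(x - 1) = -3x/2`. The power form follows by taking logarithms.
-/

open Real

lemma log_add_le_log_add_div {a t : ℝ} (ha : 0 < a) (hat : 0 < a + t) :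
    log (a + t) ≤ log a + t / a := by
  have h := log_le_sub_one_of_pos (div_pos hat ha)
  rw [log_div hat.ne' ha.ne', add_div, div_self ha.ne'] at h
  linarith

lemma log_four_add_three_mul_add_mul_log_lt {x ε : ℝ} (hx0 : 0 < x) (hx1 : x < 1)
    (hε : ε * (1 - x) = 3 * x / 2) :
    log (4 + 3 * x) + ε * log x < log 4 := by
  have hε0 : 0 < ε := pos_of_mul_pos_left (by rw [hε]; positivity) (by linarith)
  have hfirst : log (4 + 3 * x) ≤ log 4 + 3 * x / 4 :=
    log_add_le_log_add_div four_pos (by linarith)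
  have hsecond : ε * log x < ε * (x - 1) :=
    mul_lt_mul_of_pos_left (log_lt_sub_one_of_pos hx0 hx1.ne) hε0
  linarith

/-- For every `ε > 0`: `log(2(7ε+6)/(2ε+3)) + ε log(2ε/(2ε+3)) < log 4`;
equivalently `(2(7ε+6)/(2ε+3))(2ε/(2ε+3))^ε < 4`. -/
theorem stmt_14 (ε : ℝ) (hε : 0 < ε) :
    Real.log (2 * (7 * ε + 6) / (2 * ε + 3)) + ε * Real.log (2 * ε / (2 * ε + 3))
        < Real.log 4 ∧
      2 * (7 * ε + 6) / (2 * ε + 3) * (2 * ε / (2 * ε + 3)) ^ ε < 4 := by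
  have hden : 0 < 2 * ε + 3 := by linarith
  set x := 2 * ε / (2 * ε + 3) with hx
  have hx0 : 0 < x := div_pos (by linarith) hden
  have hx1 : x < 1 := (div_lt_one hden).mpr (by linarith)
  have hA : 2 * (7 * ε + 6) / (2 * ε + 3) = 4 + 3 * x := by
    rw [hx]; field_simp; ring
  have hεx : ε * (1 - x) = 3 * x / 2 := by
    rw [hx]; field_simp; ring
  have hlog := log_four_add_three_mul_add_mul_log_lt hx0 hx1 hεx
  rw [hA]
  refine ⟨hlog, ?_⟩
  rwa [← log_lt_log_iff (by positivity) four_pos, log_mul (by positivity) (by positivity),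
    log_rpow hx0]
end

section
/- Let p ≥ 2 and n ≥ 3 be integers, and let A_1, …, A_p be real symmetric n×n matrices such that A_1 is diagonal and tr(A_α) = 0 for all α ≥ 2. Set H = tr(A_1), |h|² = Σ_α ‖A_α‖², |h̊|² = |h|² − H²/n, U = |h̊|² − H²/n², R₁ = Σ_{α,β} (Σ_{i,j} (A_α)_{ij}(A_β)_{ij})² + Σ_{α,β} ‖A_α A_β − A_β A_α‖², and R₂ = H²·Σ_{i,j}((A_1)_{ij})². Then R₁ − ((n+1)/n²)·R₂ ≤ max(U, 0)·(3|h̊|² + H²/n). -/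
open scoped BigOperators
open Matrix

section helpers
variable {n : ℕ}

noncomputable def ip (X Y : Matrix (Fin n) (Fin n) ℝ) : ℝ := ∑ i, ∑ j, X i j * Y i j


lemma ip_nonneg (X : Matrix (Fin n) (Fin n) ℝ) : 0 ≤ ip X X := by
  apply Finset.sum_nonneg; intro i _; apply Finset.sum_nonneg; intro j _; exact mul_self_nonneg _

lemma ip_comm (X Y : Matrix (Fin n) (Fin n) ℝ) : ip X Y = ip Y X := by
  unfold ip; congr 1; ext i; congr 1; ext j; ring

lemma ip_sq (X : Matrix (Fin n) (Fin n) ℝ) : ip X X = ∑ i, ∑ j, (X i j)^2 := by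
  unfold ip; congr 1; ext i; congr 1; ext j; ring

lemma ip_cs (X Y : Matrix (Fin n) (Fin n) ℝ) : (ip X Y)^2 ≤ ip X X * ip Y Y := by
  have h1 : ip X Y = ∑ z : Fin n × Fin n, X z.1 z.2 * Y z.1 z.2 := by
    unfold ip; exact (Fintype.sum_prod_type (f := fun z => X z.1 z.2 * Y z.1 z.2)).symm
  have h2 : ip X X = ∑ z : Fin n × Fin n, (X z.1 z.2)^2 := by
    rw [ip_sq]; exact (Fintype.sum_prod_type (f := fun z => X z.1 z.2 ^ 2)).symm
  have h3 : ip Y Y = ∑ z : Fin n × Fin n, (Y z.1 z.2)^2 := by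
    rw [ip_sq]; exact (Fintype.sum_prod_type (f := fun z => Y z.1 z.2 ^ 2)).symm
  rw [h1, h2, h3]
  exact Finset.sum_mul_sq_le_sq_mul_sq _ _ _


lemma ip_trace (X Y : Matrix (Fin n) (Fin n) ℝ) : ip X Y = Matrix.trace (Xᵀ * Y) := by
  unfold ip
  rw [Finset.sum_comm]
  simp [Matrix.trace, Matrix.diag, Matrix.mul_apply, Matrix.transpose_apply]

lemma nrm_conj (U M : Matrix (Fin n) (Fin n) ℝ) (hU : Uᵀ * U = 1) :
    ip (U * M * Uᵀ) (U * M * Uᵀ) = ip M M := by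
  rw [ip_trace, ip_trace]
  have ht : (U * M * Uᵀ)ᵀ = U * Mᵀ * Uᵀ := by
    rw [Matrix.transpose_mul, Matrix.transpose_mul, Matrix.transpose_transpose, mul_assoc]
  rw [ht]
  have h2 : U * Mᵀ * Uᵀ * (U * M * Uᵀ) = U * (Mᵀ * M) * Uᵀ := by
    simp only [mul_assoc]
    rw [← mul_assoc Uᵀ U, hU, one_mul]
  rw [h2, Matrix.trace_mul_cycle, ← mul_assoc, hU, one_mul]

lemma ip_diag_diag (d : Fin n → ℝ) : ip (diagonal d) (diagonal d) = ∑ i, (d i)^2 := by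
  simp [ip, Matrix.diagonal_apply, ite_and, pow_two]

lemma ip_diag (d : Fin n → ℝ) (Y : Matrix (Fin n) (Fin n) ℝ) :
    ip (diagonal d) Y = ∑ i, d i * Y i i := by
  simp [ip, Matrix.diagonal_apply]

lemma diag_key (d : Fin n → ℝ) (Y : Matrix (Fin n) (Fin n) ℝ) :
    ip (diagonal d * Y - Y * diagonal d) (diagonal d * Y - Y * diagonal d)
      + 2 * (ip (diagonal d) Y)^2 ≤ 2 * ip (diagonal d) (diagonal d) * ip Y Y := by
  set T := ip (diagonal d) (diagonal d) with hT
  have hTval : T = ∑ i, (d i)^2 := ip_diag_diag d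
  have hA : ip (diagonal d * Y - Y * diagonal d) (diagonal d * Y - Y * diagonal d)
      = ∑ i, ∑ j, (d i - d j)^2 * (Y i j)^2 := by
    unfold ip
    congr 1; ext i; congr 1; ext j
    simp only [Matrix.sub_apply, Matrix.diagonal_mul, Matrix.mul_diagonal]
    ring
  have hB : ∀ i j : Fin n, (d i - d j)^2 * (Y i j)^2
      ≤ 2*T*(Y i j)^2 - (if i = j then 2*T*(Y i j)^2 else 0) := by
    intro i j
    by_cases hij : i = j
    · simp [hij]
    · simp only [hij, if_false, sub_zero]
      have h1 : d i^2 + d j^2 ≤ T := by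
        rw [hTval]
        have : ∑ k ∈ ({i, j} : Finset (Fin n)), (d k)^2 ≤ ∑ k, (d k)^2 := by
          apply Finset.sum_le_sum_of_subset_of_nonneg (Finset.subset_univ _)
          intro k _ _; positivity
        rwa [Finset.sum_pair hij] at this
      nlinarith [sq_nonneg (Y i j), sq_nonneg (d i + d j)]
  have hC : ∑ i, ∑ j, (if i = j then 2*T*(Y i j)^2 else 0) = 2*T*∑ i, (Y i i)^2 := by
    rw [Finset.mul_sum]
    congr 1; ext i
    simp
  have hD : 2*(ip (diagonal d) Y)^2 ≤ 2*T*∑ i, (Y i i)^2 := by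
    rw [ip_diag, hTval]
    have := Finset.sum_mul_sq_le_sq_mul_sq Finset.univ d (fun i => Y i i)
    nlinarith [this]
  have hE : ∑ i, ∑ j, (d i - d j)^2 * (Y i j)^2
      ≤ 2*T*(ip Y Y) - 2*T*∑ i, (Y i i)^2 := by
    have : ∑ i, ∑ j, (d i - d j)^2 * (Y i j)^2
        ≤ ∑ i, ∑ j, (2*T*(Y i j)^2 - (if i = j then 2*T*(Y i j)^2 else 0)) := by
      apply Finset.sum_le_sum; intro i _
      apply Finset.sum_le_sum; intro j _
      exact hB i j
    calc ∑ i, ∑ j, (d i - d j)^2 * (Y i j)^2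
        ≤ ∑ i, ∑ j, (2*T*(Y i j)^2 - (if i = j then 2*T*(Y i j)^2 else 0)) := this
      _ = (∑ i, ∑ j, 2*T*(Y i j)^2) - ∑ i, ∑ j, (if i = j then 2*T*(Y i j)^2 else 0) := by
          rw [← Finset.sum_sub_distrib]
          congr 1; ext i; rw [← Finset.sum_sub_distrib]
      _ = 2*T*(ip Y Y) - 2*T*∑ i, (Y i i)^2 := by
          rw [hC]
          congr 1
          unfold ip
          rw [Finset.mul_sum]
          congr 1; ext i
          rw [Finset.mul_sum]
          congr 1; ext j
          ring
  rw [hA]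
  linarith

lemma comm_conj_bound (U D Y : Matrix (Fin n) (Fin n) ℝ) (d : Fin n → ℝ)
    (hD : D = diagonal d) (hU : Uᵀ * U = 1) (hU' : U * Uᵀ = 1) :
    ip ((U*D*Uᵀ)*Y - Y*(U*D*Uᵀ)) ((U*D*Uᵀ)*Y - Y*(U*D*Uᵀ))
      ≤ 2 * ip D D * ip Y Y := by
  set C := Uᵀ * Y * U with hC
  have key : (U*D*Uᵀ)*Y - Y*(U*D*Uᵀ) = U*(D*C - C*D)*Uᵀ := by
    rw [hC]
    have e1 : U*D*Uᵀ*Y = U*(D*(Uᵀ*Y*U))*Uᵀ := by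
      simp only [mul_assoc]
      rw [hU', mul_one]
    have e2 : Y*(U*D*Uᵀ) = U*((Uᵀ*Y*U)*D)*Uᵀ := by
      simp only [mul_assoc]
      rw [← mul_assoc U Uᵀ, hU', one_mul]
    rw [e1, e2, ← Matrix.sub_mul, ← Matrix.mul_sub]
  rw [key]
  have hCC : ip C C = ip Y Y := by
    have h := nrm_conj Uᵀ Y (by rwa [Matrix.transpose_transpose]) 
    rwa [Matrix.transpose_transpose] at h
  calc ip (U*(D*C - C*D)*Uᵀ) (U*(D*C - C*D)*Uᵀ) = ip (D*C - C*D) (D*C - C*D) :=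
        nrm_conj U _ hU
    _ ≤ 2 * ip D D * ip C C := by
        subst hD
        have := diag_key d C
        nlinarith [sq_nonneg (ip (diagonal d) C)]
    _ = 2 * ip D D * ip Y Y := by rw [hCC]

lemma comm_bound (X Y : Matrix (Fin n) (Fin n) ℝ) (hX : Xᵀ = X) :
    ip (X*Y - Y*X) (X*Y - Y*X) ≤ 2 * ip X X * ip Y Y := by
  have hX' : X.IsHermitian := by
    show Xᴴ = X
    ext i j
    simp only [Matrix.conjTranspose_apply, star_trivial]
    exact congrFun (congrFun hX i) j
  set U : Matrix (Fin n) (Fin n) ℝ := (hX'.eigenvectorUnitary : Matrix (Fin n) (Fin n) ℝ) with hUdef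
  have hsU : star U = Uᵀ := by
    ext i j; simp [Matrix.star_eq_conjTranspose, Matrix.conjTranspose_apply]
  have hU : Uᵀ * U = 1 := by
    rw [← hsU]; exact (Matrix.mem_unitaryGroup_iff').mp hX'.eigenvectorUnitary.2
  have hU' : U * Uᵀ = 1 := by
    rw [← hsU]; exact (Matrix.mem_unitaryGroup_iff).mp hX'.eigenvectorUnitary.2
  set D : Matrix (Fin n) (Fin n) ℝ := diagonal (RCLike.ofReal ∘ hX'.eigenvalues) with hDdef
  have hspec : X = U * D * Uᵀ := by
    rw [← hsU]
    exact hX'.spectral_theorem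
  have h := comm_conj_bound U D Y (RCLike.ofReal ∘ hX'.eigenvalues) rfl hU hU'
  rw [← hspec] at h
  have hXD : ip X X = ip D D := by
    rw [hspec]; exact nrm_conj U D hU
  rw [hXD]
  exact h

lemma scalar_final (N s q u : ℝ) (hN : 3 ≤ N) (hs : 0 ≤ s) (hq : 0 ≤ q) (hu : 0 ≤ u) :
    (s+N*u)^2 + 4*s*q + 3*q^2 - (N+1)*u*(s+N*u) ≤ max (s+q-u) 0 * (3*(s+q)+N*u) := by
  rcases le_total u (s+q) with h | h
  · rw [max_eq_left (by linarith)]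
    nlinarith [mul_nonneg hs (sub_nonneg.2 h), mul_nonneg hu (mul_nonneg (by linarith : (0:ℝ) ≤ N - 3) hq)]
  · rw [max_eq_right (by linarith)]
    have h1 : 0 ≤ s + N*u := by nlinarith
    have h2 : q ≤ u - s := by linarith
    nlinarith [mul_le_mul_of_nonneg_left h2 h1, mul_nonneg (mul_nonneg hu hq) (by linarith : (0:ℝ) ≤ N - 3), mul_nonneg (mul_nonneg hs hq) (by linarith : (0:ℝ) ≤ N - 3), mul_nonneg hs hq, mul_nonneg hu hq]

lemma ip_one_left (Y : Matrix (Fin n) (Fin n) ℝ) : ip 1 Y = Matrix.trace Y := by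
  simp [ip, Matrix.one_apply, Matrix.trace, Matrix.diag]

lemma ip_add_left (X Z Y : Matrix (Fin n) (Fin n) ℝ) : ip (X + Z) Y = ip X Y + ip Z Y := by
  simp [ip, Matrix.add_apply, add_mul, Finset.sum_add_distrib]

lemma ip_smul_left (c : ℝ) (X Y : Matrix (Fin n) (Fin n) ℝ) : ip (c • X) Y = c * ip X Y := by
  simp [ip, Matrix.smul_apply, Finset.mul_sum, mul_assoc]

lemma ip_neg_flip (M : Matrix (Fin n) (Fin n) ℝ) : ip (-M) (-M) = ip M M := by
  simp [ip]

lemma ip_zero : ip (0 : Matrix (Fin n) (Fin n) ℝ) 0 = 0 := by simp [ip]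

lemma ip_add_right (X Z Y : Matrix (Fin n) (Fin n) ℝ) : ip X (Y + Z) = ip X Y + ip X Z := by
  rw [ip_comm, ip_add_left, ip_comm Y X, ip_comm Z X]

lemma ip_smul_right (c : ℝ) (X Y : Matrix (Fin n) (Fin n) ℝ) : ip X (c • Y) = c * ip X Y := by
  rw [ip_comm, ip_smul_left, ip_comm]

lemma ip_one_right (Y : Matrix (Fin n) (Fin n) ℝ) : ip Y 1 = Matrix.trace Y := by
  rw [ip_comm, ip_one_left]

end helpers

set_option maxHeartbeats 1600000 in
/-- The estimate `R₁ − ((n+1)/n²) R₂ ≤ U₊ (3|h̊|² + |H|²/n)` from Section 4. -/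
theorem stmt_16 (p n : ℕ) [NeZero p] (hp : 2 ≤ p) (hn : 3 ≤ n)
    (A : Fin p → Matrix (Fin n) (Fin n) ℝ)
    (hA : ∀ α, (A α)ᵀ = A α)
    (hdiag : (A 0).IsDiag)
    (htr : ∀ α, α ≠ 0 → Matrix.trace (A α) = 0)
    (H h2 hring2 U R1 R2 : ℝ)
    (hH : H = Matrix.trace (A 0))
    (hh2 : h2 = ∑ α, ∑ i, ∑ j, (A α i j) ^ 2)
    (hhring2 : hring2 = h2 - H ^ 2 / (n : ℝ))
    (hU : U = hring2 - H ^ 2 / (n : ℝ) ^ 2)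
    (hR1 : R1 = (∑ α, ∑ β, (∑ i, ∑ j, A α i j * A β i j) ^ 2)
        + ∑ α, ∑ β, ∑ i, ∑ j, ((A α * A β - A β * A α) i j) ^ 2)
    (hR2 : R2 = H ^ 2 * ∑ i, ∑ j, (A 0 i j) ^ 2) :
    R1 - (((n : ℝ) + 1) / (n : ℝ) ^ 2) * R2
      ≤ max U 0 * (3 * hring2 + H ^ 2 / (n : ℝ)) := by
  have hnR : (3:ℝ) ≤ (n:ℝ) := by exact_mod_cast hn
  have hnpos : (0:ℝ) < (n:ℝ) := by linarith
  have hnne : (n:ℝ) ≠ 0 := ne_of_gt hnpos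
  set c : ℝ := H / n with hc
  set D : Matrix (Fin n) (Fin n) ℝ := A 0 - c • 1 with hDdef
  set d : Fin n → ℝ := fun i => A 0 i i - c with hd
  have hD : D = diagonal d := by
    ext i j
    by_cases h : i = j
    · subst h
      simp [hDdef, Matrix.sub_apply, Matrix.smul_apply, Matrix.one_apply_eq,
        Matrix.diagonal_apply_eq, hd]
    · simp [hDdef, Matrix.sub_apply, Matrix.smul_apply, Matrix.one_apply_ne h,
        Matrix.diagonal_apply_ne _ h, hdiag h]
  have hA0 : A 0 = D + c • 1 := by rw [hDdef]; abel
  have htrD : Matrix.trace D = 0 := by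
    rw [hDdef, Matrix.trace_sub, Matrix.trace_smul, Matrix.trace_one, ← hH, hc]
    simp
    field_simp
    ring
  set s : ℝ := ip D D with hs_def
  set q : ℝ := ∑ α ∈ Finset.univ.erase 0, ip (A α) (A α) with hq_def
  set u : ℝ := H^2 / (n:ℝ)^2 with hu_def
  have hs : 0 ≤ s := ip_nonneg D
  have hq : 0 ≤ q := Finset.sum_nonneg fun α _ => ip_nonneg (A α)
  have hu : 0 ≤ u := by positivity
  have hnu : (n:ℝ) * u = H^2 / n := by rw [hu_def]; field_simp
  have hn2u : (n:ℝ)^2 * u = H^2 := by rw [hu_def]; field_simp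
  -- ip of A 0 with things
  have ipD1 : ip D 1 = 0 := by rw [ip_comm, ip_one_left, htrD]
  have ip1D : ip 1 D = 0 := by rw [ip_one_left, htrD]
  have ipA00 : ip (A 0) (A 0) = s + (n:ℝ)*u := by
    rw [hA0, ip_add_left, ip_add_right, ip_add_right, ip_smul_left, ip_smul_left,
      ip_smul_right, ip_smul_right, ipD1, ip1D, ip_one_right, Matrix.trace_one]
    simp only [mul_zero, add_zero, zero_add, Fintype.card_fin]
    have : c * (c * ((n:ℕ):ℝ)) = (n:ℝ) * u := by
      rw [hc, hu_def]; push_cast; field_simp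
    rw [this]
  have ipA0β : ∀ β, β ≠ 0 → ip (A 0) (A β) = ip D (A β) := by
    intro β hβ
    rw [hA0, ip_add_left, ip_smul_left, ip_one_left, htr β hβ, mul_zero, add_zero]
  have hcomm0 : ∀ Z : Matrix (Fin n) (Fin n) ℝ, A 0 * Z - Z * A 0 = D * Z - Z * D := by
    intro Z
    rw [hA0]
    simp only [Matrix.add_mul, Matrix.mul_add, Matrix.smul_mul, Matrix.mul_smul, one_mul,
      Matrix.mul_one]
    abel
  set F : Fin p → Fin p → ℝ := fun α β => (ip (A α) (A β))^2
      + ip (A α*A β - A β*A α) (A α*A β - A β*A α) with hF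
  have hR1' : R1 = ∑ α, ∑ β, F α β := by
    rw [hR1, ← Finset.sum_add_distrib]
    congr 1; ext α
    rw [← Finset.sum_add_distrib]
    congr 1; ext β
    rw [hF]
    simp only [ip_sq]
    simp [ip]
  have split : ∀ f : Fin p → ℝ, ∑ α, f α = f 0 + ∑ α ∈ Finset.univ.erase 0, f α :=
    fun f => (Finset.add_sum_erase Finset.univ f (Finset.mem_univ 0)).symm
  have B00 : F 0 0 = (s + (n:ℝ)*u)^2 := by
    show (ip (A 0) (A 0))^2 + ip (A 0*A 0 - A 0*A 0) (A 0*A 0 - A 0*A 0) = _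
    rw [ipA00, sub_self]
    simp [ip]
  have B0β : ∀ β ∈ Finset.univ.erase 0, F 0 β ≤ 2 * s * ip (A β) (A β) := by
    intro β hβ
    have hβ0 : β ≠ 0 := Finset.ne_of_mem_erase hβ
    have h1 := diag_key d (A β)
    rw [← hD] at h1
    have h2 : F 0 β = (ip D (A β))^2 + ip (D*A β - A β*D) (D*A β - A β*D) := by
      show (ip (A 0) (A β))^2 + ip (A 0*A β - A β*A 0) (A 0*A β - A β*A 0) = _
      rw [ipA0β β hβ0, hcomm0]
    rw [h2]
    rw [← hs_def] at h1
    nlinarith [sq_nonneg (ip D (A β))]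
  have Bβ0 : ∀ β ∈ Finset.univ.erase 0, F β 0 ≤ 2 * s * ip (A β) (A β) := by
    intro β hβ
    have hβ0 : β ≠ 0 := Finset.ne_of_mem_erase hβ
    have h1 := diag_key d (A β)
    rw [← hD] at h1
    have h2 : F β 0 = (ip D (A β))^2 + ip (D*A β - A β*D) (D*A β - A β*D) := by
      show (ip (A β) (A 0))^2 + ip (A β*A 0 - A 0*A β) (A β*A 0 - A 0*A β) = _
      rw [ip_comm, ipA0β β hβ0]
      have h3 : A β*A 0 - A 0*A β = -(D*A β - A β*D) := by
        rw [← hcomm0 (A β)]; abel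
      rw [h3, ip_neg_flip]
    rw [h2]
    rw [← hs_def] at h1
    nlinarith [sq_nonneg (ip D (A β))]
  have Bαβ : ∀ α ∈ Finset.univ.erase (0 : Fin p), ∀ β ∈ Finset.univ.erase (0 : Fin p),
      F α β ≤ 3 * ip (A α) (A α) * ip (A β) (A β) := by
    intro α _ β _
    have h1 := ip_cs (A α) (A β)
    have h2 := comm_bound (A α) (A β) (hA α)
    show (ip (A α) (A β))^2 + ip (A α*A β - A β*A α) (A α*A β - A β*A α) ≤ _
    linarith [h1, h2]
  have hR1b : R1 ≤ (s + (n:ℝ)*u)^2 + 2*s*q + (2*s*q + 3*q^2) := by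
    rw [hR1', split (fun α => ∑ β, F α β)]
    have hsum2 : ∑ α ∈ Finset.univ.erase 0, ∑ β, F α β
        = ∑ α ∈ Finset.univ.erase 0, (F α 0 + ∑ β ∈ Finset.univ.erase 0, F α β) :=
      Finset.sum_congr rfl (fun α _ => split (F α))
    rw [split (F 0), hsum2]
    have p1 : ∑ β ∈ Finset.univ.erase 0, F 0 β ≤ 2*s*q := by
      calc ∑ β ∈ Finset.univ.erase 0, F 0 β
          ≤ ∑ β ∈ Finset.univ.erase 0, 2 * s * ip (A β) (A β) := Finset.sum_le_sum B0β
        _ = 2*s*q := by rw [hq_def, Finset.mul_sum]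
    have p2 : ∑ α ∈ Finset.univ.erase 0, (F α 0 + ∑ β ∈ Finset.univ.erase 0, F α β)
        ≤ 2*s*q + 3*q^2 := by
      have step : ∀ α ∈ Finset.univ.erase (0 : Fin p),
          F α 0 + ∑ β ∈ Finset.univ.erase 0, F α β
            ≤ 2 * s * ip (A α) (A α) + 3 * ip (A α) (A α) * q := by
        intro α hα
        have i1 : ∑ β ∈ Finset.univ.erase 0, F α β
            ≤ ∑ β ∈ Finset.univ.erase 0, 3 * ip (A α) (A α) * ip (A β) (A β) :=
          Finset.sum_le_sum (fun β hβ => Bαβ α hα β hβ)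
        have i2 : ∑ β ∈ Finset.univ.erase 0, 3 * ip (A α) (A α) * ip (A β) (A β)
            = 3 * ip (A α) (A α) * q := by rw [hq_def, Finset.mul_sum]
        have := Bβ0 α hα
        linarith
      calc ∑ α ∈ Finset.univ.erase 0, (F α 0 + ∑ β ∈ Finset.univ.erase 0, F α β)
          ≤ ∑ α ∈ Finset.univ.erase 0, (2 * s * ip (A α) (A α) + 3 * ip (A α) (A α) * q) :=
            Finset.sum_le_sum step
        _ = 2*s*q + 3*q^2 := by
            rw [Finset.sum_add_distrib, ← Finset.mul_sum, ← Finset.sum_mul, ← hq_def]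
            have : ∑ α ∈ Finset.univ.erase (0:Fin p), 3 * ip (A α) (A α)
                = 3 * q := by rw [hq_def, Finset.mul_sum]
            rw [this]
            ring
    rw [B00]
    linarith
  have hh2' : h2 = (s + (n:ℝ)*u) + q := by
    rw [hh2, Finset.sum_congr rfl (fun α _ => (ip_sq (A α)).symm),
      split (fun α => ip (A α) (A α)), ipA00, ← hq_def]
  have hring2' : hring2 = s + q := by
    rw [hhring2, hh2', ← hnu]; ring
  have hU' : U = s + q - u := by rw [hU, hring2']
  have hR2' : ((n:ℝ)+1)/(n:ℝ)^2 * R2 = ((n:ℝ)+1)*u*(s + (n:ℝ)*u) := by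
    rw [hR2, ← ip_sq, ipA00, ← hn2u]
    field_simp
  rw [hU', hring2', ← hnu]
  have final := scalar_final (n:ℝ) s q u hnR hs hq hu
  linarith [hR1b, final, hR2']
end
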